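/- arXiv:1009.4085 — 9 statements merged into one kernel-verified Lean document; each statement's English description precedes it below -/
import Mathlib

section
/- If f, g : [a,b] → ℝ with a, b ∈ [0,∞), a < b, g and f·g integrable on [a,b], f convex and nonnegative on [a,b], and g is s-convex in the second sense on [a,b] for some fixed s ∈ (0,1), then (1/(b-a)) ∫_a^b f(x)g(x) dx ≤ (1/(s+2))·(f(a)g(a)+f(b)g(b)) + (1/((s+1)(s+2)))·(f(a)g(b)+f(b)g(a)). -/
/-!
Writing `x = t a + (1 - t) b`, convexity of `f` and s-convexity of `g` bound `f x * g x` by the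
product of `t f(a) + (1 - t) f(b)` and `t^s g(a) + (1 - t)^s g(b)`; both factors are nonnegative,
since for `s < 1` an s-convex function is nonnegative. Integrating this bound over `t ∈ [0, 1]`
only needs `∫ t^(s+1) = 1/(s+2)` and `∫ (1 - t) t^s = 1/((s+1)(s+2))`.
-/

open MeasureTheory Set

/-- `s`-convexity in the second sense (Breckner). -/
def SConvexOn {E : Type*} [AddCommMonoid E] [Module ℝ E] (s : ℝ) (S : Set E) (g : E → ℝ) :
    Prop :=
  ∀ x ∈ S, ∀ y ∈ S, ∀ l ∈ Icc (0 : ℝ) 1, g (l • x + (1 - l) • y) ≤ l ^ s * g x + (1 - l) ^ s * g y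

section SConvexOn

variable {E : Type*} [AddCommMonoid E] [Module ℝ E] {s : ℝ} {S : Set E} {g : E → ℝ}

theorem SConvexOn.nonneg (hg : SConvexOn s S g) (hs : s < 1) {x : E} (hx : x ∈ S) : 0 ≤ g x := by
  have hmid := hg x hx x hx (1 / 2) ⟨by norm_num, by norm_num⟩
  rw [← add_smul, show (1 / 2 : ℝ) + (1 - 1 / 2) = 1 by norm_num, one_smul] at hmid
  -- `g x ≤ 2 (1/2)^s g x` with `2 (1/2)^s > 1`
  have hhalf : (1 / 2 : ℝ) < (1 / 2) ^ s := by
    simpa using Real.rpow_lt_rpow_of_exponent_gt (x := (1 / 2 : ℝ)) (by norm_num) (by norm_num) hs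
  norm_num at hmid
  nlinarith

theorem ConvexOn.mul_le_of_sConvexOn {f : E → ℝ} (hf : ConvexOn ℝ S f) (hg : SConvexOn s S g)
    (hs : s < 1) {a b : E} (ha : a ∈ S) (hb : b ∈ S) (hfa : 0 ≤ f a) (hfb : 0 ≤ f b) {t : ℝ}
    (ht : t ∈ Icc (0 : ℝ) 1) :
    f (t • a + (1 - t) • b) * g (t • a + (1 - t) • b) ≤
      (t * f a + (1 - t) * f b) * (t ^ s * g a + (1 - t) ^ s * g b) := by
  obtain ⟨ht0, ht1⟩ := ht
  have ht1' : 0 ≤ 1 - t := sub_nonneg.2 ht1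
  have hmem : t • a + (1 - t) • b ∈ S := hf.1 ha hb ht0 ht1' (add_sub_cancel t 1)
  have hf_le : f (t • a + (1 - t) • b) ≤ t * f a + (1 - t) * f b :=
    hf.2 ha hb ht0 ht1' (add_sub_cancel t 1)
  have hchord : 0 ≤ t * f a + (1 - t) * f b := by positivity
  exact mul_le_mul hf_le (hg a ha b hb t ⟨ht0, ht1⟩) (hg.nonneg hs hmem) hchord

end SConvexOn

theorem intervalIntegral.integral_comp_sub_div_sub {a b : ℝ} (hab : a ≠ b) (F : ℝ → ℝ) :
    ∫ x in a..b, F ((b - x) / (b - a)) = (b - a) * ∫ t in (0 : ℝ)..1, F t := by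
  have hba : b - a ≠ 0 := sub_ne_zero.2 hab.symm
  simp_rw [sub_div]
  rw [intervalIntegral.integral_comp_sub_div F hba, sub_self, ← sub_div, div_self hba, smul_eq_mul]

theorem integral_affine_mul_rpow {s : ℝ} (hs : -1 < s) (α β : ℝ) :
    ∫ t in (0 : ℝ)..1, (t * α + (1 - t) * β) * t ^ s =
      1 / (s + 2) * α + 1 / ((s + 1) * (s + 2)) * β := by
  have hs1 : s + 1 ≠ 0 := by linarith
  have hs2 : s + 2 ≠ 0 := by linarith
  have hexpand : EqOn (fun t : ℝ => (t * α + (1 - t) * β) * t ^ s)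
      (fun t => (α - β) * t ^ (s + 1) + β * t ^ s) (uIcc 0 1) := by
    intro t ht
    rw [uIcc_of_le zero_le_one] at ht
    simp only [Real.rpow_add_one' ht.1 hs1]
    ring
  rw [intervalIntegral.integral_congr hexpand, intervalIntegral.integral_add
    ((intervalIntegral.intervalIntegrable_rpow' (by linarith)).const_mul _)
    ((intervalIntegral.intervalIntegrable_rpow' hs).const_mul _),
    intervalIntegral.integral_const_mul, intervalIntegral.integral_const_mul,
    integral_rpow (Or.inl (by linarith)), integral_rpow (Or.inl hs), show s + 1 + 1 = s + 2 by ring,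
    Real.zero_rpow hs1, Real.zero_rpow hs2, Real.one_rpow, Real.one_rpow]
  field_simp
  ring

theorem integral_affine_mul_sConvex_bound {s : ℝ} (hs : -1 < s) (p q u v : ℝ) :
    ∫ t in (0 : ℝ)..1, (t * p + (1 - t) * q) * (t ^ s * u + (1 - t) ^ s * v) =
      1 / (s + 2) * (p * u + q * v) + 1 / ((s + 1) * (s + 2)) * (p * v + q * u) := by
  have hint₁ : IntervalIntegrable (fun t : ℝ => (t * p + (1 - t) * q) * t ^ s) volume 0 1 :=
    (intervalIntegral.intervalIntegrable_rpow' hs).continuousOn_mul (by fun_prop)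
  have hint₂ : IntervalIntegrable (fun t : ℝ => (t * p + (1 - t) * q) * (1 - t) ^ s) volume 0 1 := by
    have h := (intervalIntegral.intervalIntegrable_rpow' hs (a := 0) (b := 1)).comp_sub_left 1
    rw [sub_self, sub_zero] at h
    exact h.symm.continuousOn_mul (by fun_prop)
  have hsymm : ∫ t in (0 : ℝ)..1, (t * p + (1 - t) * q) * (1 - t) ^ s =
      ∫ t in (0 : ℝ)..1, (t * q + (1 - t) * p) * t ^ s := by
    have h := intervalIntegral.integral_comp_sub_left
      (fun t => (t * q + (1 - t) * p) * t ^ s) (1 : ℝ) (a := 0) (b := 1)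
    rw [sub_self, sub_zero] at h
    rw [← h]
    refine intervalIntegral.integral_congr fun t _ => ?_
    simp only [sub_sub_cancel]
    ring
  calc _ = u * (∫ t in (0 : ℝ)..1, (t * p + (1 - t) * q) * t ^ s)
        + v * ∫ t in (0 : ℝ)..1, (t * p + (1 - t) * q) * (1 - t) ^ s := by
        rw [← intervalIntegral.integral_const_mul, ← intervalIntegral.integral_const_mul,
          ← intervalIntegral.integral_add (hint₁.const_mul u) (hint₂.const_mul v)]
        refine intervalIntegral.integral_congr fun t _ => ?_
        ring
    _ = _ := by
      rw [hsymm, integral_affine_mul_rpow hs p q, integral_affine_mul_rpow hs q p]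
      ring

theorem product_hadamard_convex_sconvex_general
    (a b s : ℝ) (f g : ℝ → ℝ)
    (hab : a < b)
    (hs : s ∈ Set.Ioo (0:ℝ) 1)
    (hfg : IntervalIntegrable (fun x => f x * g x) volume a b)
    (hf : ConvexOn ℝ (Set.Icc a b) f)
    (hf0 : ∀ x ∈ Set.Icc a b, 0 ≤ f x)
    (hgs : ∀ x ∈ Set.Icc a b, ∀ y ∈ Set.Icc a b, ∀ l ∈ Set.Icc (0:ℝ) 1,
      g (l * x + (1 - l) * y) ≤ l ^ s * g x + (1 - l) ^ s * g y) :
    (1 / (b - a)) * ∫ x in a..b, f x * g x ≤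
      (1 / (s + 2)) * (f a * g a + f b * g b) +
        (1 / ((s + 1) * (s + 2))) * (f a * g b + f b * g a) := by
  obtain ⟨hs0, hs1⟩ := hs
  have hba : 0 < b - a := sub_pos.2 hab
  have ha : a ∈ Icc a b := left_mem_Icc.2 hab.le
  have hb : b ∈ Icc a b := right_mem_Icc.2 hab.le
  set ψ : ℝ → ℝ := fun t => (t * f a + (1 - t) * f b) * (t ^ s * g a + (1 - t) ^ s * g b) with hψ_def
  have hψ : Continuous ψ := by rw [hψ_def]; fun_prop (disch := exact hs0.le)
  have hpoint : ∀ x ∈ Icc a b, f x * g x ≤ ψ ((b - x) / (b - a)) := by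
    intro x hx
    have ht : (b - x) / (b - a) ∈ Icc (0 : ℝ) 1 := by
      constructor
      · exact div_nonneg (by linarith [hx.2]) hba.le
      · rw [div_le_one hba]; linarith [hx.1]
    have hx' : (b - x) / (b - a) * a + (1 - (b - x) / (b - a)) * b = x := by
      field_simp; ring
    simpa only [smul_eq_mul, hx'] using
      hf.mul_le_of_sConvexOn hgs hs1 ha hb (hf0 a ha) (hf0 b hb) ht
  have hle : ∫ x in a..b, f x * g x ≤ ∫ x in a..b, ψ ((b - x) / (b - a)) :=
    intervalIntegral.integral_mono_on hab.le hfg ((hψ.comp (by fun_prop)).intervalIntegrable _ _)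
      hpoint
  rw [intervalIntegral.integral_comp_sub_div_sub hab.ne ψ,
    integral_affine_mul_sConvex_bound (by linarith)] at hle
  rw [div_mul_eq_mul_div, one_mul, div_le_iff₀ hba, mul_comm]
  exact hle

theorem product_hadamard_convex_sconvex
    (a b s : ℝ) (f g : ℝ → ℝ)
    (ha : 0 ≤ a) (hb : 0 ≤ b) (hab : a < b)
    (hs : s ∈ Set.Ioo (0:ℝ) 1)
    (hg : IntervalIntegrable g volume a b)
    (hfg : IntervalIntegrable (fun x => f x * g x) volume a b)
    (hf : ConvexOn ℝ (Set.Icc a b) f)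
    (hf0 : ∀ x ∈ Set.Icc a b, 0 ≤ f x)
    (hgs : ∀ x ∈ Set.Icc a b, ∀ y ∈ Set.Icc a b, ∀ l ∈ Set.Icc (0:ℝ) 1,
      g (l * x + (1 - l) * y) ≤ l ^ s * g x + (1 - l) ^ s * g y) :
    (1 / (b - a)) * ∫ x in a..b, f x * g x ≤
      (1 / (s + 2)) * (f a * g a + f b * g b) +
        (1 / ((s + 1) * (s + 2))) * (f a * g b + f b * g a) :=
  product_hadamard_convex_sconvex_general a b s f g hab hs hfg hf hf0 hgs
end

section
/- If f, g : [a,b] → ℝ with a, b ∈ [0,∞), a < b, g and f·g integrable on [a,b], f convex and nonnegative on [a,b], and g is s-convex in the second sense on [a,b] for some fixed s ∈ (0,1), then 2^s · f((a+b)/2) g((a+b)/2) − (1/(b-a)) ∫_a^b f(x)g(x) dx ≤ (1/((s+1)(s+2)))·(f(a)g(a)+f(b)g(b)) + (1/(s+2))·(f(a)g(b)+f(b)g(a)). -/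
/-!
Write `u = t a + (1 - t) b` and `v = t b + (1 - t) a`, whose midpoint is `m = (a + b) / 2`.
Convexity of `f` and `s`-convexity of `g` at `m` give
`2 * 2 ^ s * f m * g m ≤ (f u + f v) * (g u + g v)` (nonnegativity of `g`, needed to multiply the
two inequalities, follows from `s < 1`). Integrated over `t ∈ [0, 1]`, the diagonal terms give
twice the mean value of `f g`, and the cross terms `f u g v`, `f v g u` are bounded by the products
of the endpoint bounds, whose integrals are `∫ t ^ s (1 - t) = 1 / ((s + 1) (s + 2))` and
`∫ t ^ (s + 1) = 1 / (s + 2)`.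
-/

open MeasureTheory Set

def IsSConvexOn (s : ℝ) (S : Set ℝ) (g : ℝ → ℝ) : Prop :=
  ∀ x ∈ S, ∀ y ∈ S, ∀ l ∈ Icc (0 : ℝ) 1, g (l * x + (1 - l) * y) ≤ l ^ s * g x + (1 - l) ^ s * g y

namespace IsSConvexOn

variable {s : ℝ} {S : Set ℝ} {f g : ℝ → ℝ}

lemma rpow_mul_midpoint_le (hg : IsSConvexOn s S g) {x y : ℝ} (hx : x ∈ S) (hy : y ∈ S) :
    2 ^ s * g ((x + y) / 2) ≤ g x + g y := by
  have h := hg x hx y hy 2⁻¹ ⟨by norm_num, by norm_num⟩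
  rw [show (1 : ℝ) - 2⁻¹ = 2⁻¹ by norm_num, show 2⁻¹ * x + 2⁻¹ * y = (x + y) / 2 by ring,
    Real.inv_rpow zero_le_two, ← mul_add] at h
  have h2s : (0 : ℝ) < 2 ^ s := by positivity
  calc 2 ^ s * g ((x + y) / 2) ≤ 2 ^ s * ((2 ^ s)⁻¹ * (g x + g y)) := by gcongr
    _ = g x + g y := by field_simp

lemma nonneg (hg : IsSConvexOn s S g) (hs : s < 1) {x : ℝ} (hx : x ∈ S) : 0 ≤ g x := by
  have h := hg.rpow_mul_midpoint_le hx hx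
  rw [add_self_div_two] at h
  have : (2 : ℝ) ^ s < 2 ^ (1 : ℝ) := Real.rpow_lt_rpow_of_exponent_lt one_lt_two hs
  rw [Real.rpow_one] at this
  nlinarith

lemma two_mul_rpow_mul_mul_midpoint_le (hg : IsSConvexOn s S g) (hg0 : ∀ x ∈ S, 0 ≤ g x)
    (hf : ConvexOn ℝ S f) (hf0 : ∀ x ∈ S, 0 ≤ f x) {x y : ℝ} (hx : x ∈ S) (hy : y ∈ S) :
    2 * 2 ^ s * (f ((x + y) / 2) * g ((x + y) / 2)) ≤ (f x + f y) * (g x + g y) := by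
  have hmid : (2⁻¹ : ℝ) • x + (2⁻¹ : ℝ) • y = (x + y) / 2 := by simp only [smul_eq_mul]; ring
  have hm : (x + y) / 2 ∈ S := hmid ▸ hf.1 hx hy (by norm_num) (by norm_num) (by norm_num)
  have hfm : 2 * f ((x + y) / 2) ≤ f x + f y := by
    have := hmid ▸ hf.2 hx hy (by norm_num : (0 : ℝ) ≤ 2⁻¹) (by norm_num) (by norm_num)
    simp only [smul_eq_mul] at this
    linarith
  calc 2 * 2 ^ s * (f ((x + y) / 2) * g ((x + y) / 2))
      = (2 * f ((x + y) / 2)) * (2 ^ s * g ((x + y) / 2)) := by ring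
    _ ≤ (f x + f y) * (g x + g y) :=
      mul_le_mul hfm (hg.rpow_mul_midpoint_le hx hy) (by positivity [hg0 _ hm])
        (add_nonneg (hf0 x hx) (hf0 y hy))

lemma apply_mul_apply_swap_le (hg : IsSConvexOn s S g) (hg0 : ∀ x ∈ S, 0 ≤ g x)
    (hf : ConvexOn ℝ S f) (hf0 : ∀ x ∈ S, 0 ≤ f x) {x y t : ℝ} (hx : x ∈ S) (hy : y ∈ S)
    (ht : t ∈ Icc (0 : ℝ) 1) :
    f (t * x + (1 - t) * y) * g (t * y + (1 - t) * x) ≤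
      (t * f x + (1 - t) * f y) * (t ^ s * g y + (1 - t) ^ s * g x) := by
  have hu : t * x + (1 - t) * y ∈ S := hf.1 hx hy ht.1 (by linarith [ht.2]) (by ring)
  have hv : t * y + (1 - t) * x ∈ S := hf.1 hy hx ht.1 (by linarith [ht.2]) (by ring)
  have hfu : f (t * x + (1 - t) * y) ≤ t * f x + (1 - t) * f y :=
    hf.2 hx hy ht.1 (by linarith [ht.2]) (by ring)
  exact mul_le_mul hfu (hg y hy x hx t ht) (hg0 _ hv) ((hf0 _ hu).trans hfu)

end IsSConvexOn

lemma le_two_mul_integral_of_le_add_comp_one_sub {c : ℝ} {φ : ℝ → ℝ}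
    (hφ : IntervalIntegrable φ volume 0 1) (h : ∀ t ∈ Icc (0 : ℝ) 1, c ≤ φ t + φ (1 - t)) :
    c ≤ 2 * ∫ t in (0 : ℝ)..1, φ t := by
  have hφ' : IntervalIntegrable (fun t => φ (1 - t)) volume 0 1 := by
    simpa using (hφ.comp_sub_left 1).symm
  have hsymm : ∫ t in (0 : ℝ)..1, φ (1 - t) = ∫ t in (0 : ℝ)..1, φ t := by
    simp [intervalIntegral.integral_comp_sub_left]
  calc c = ∫ _ in (0 : ℝ)..1, c := by simp
    _ ≤ ∫ t in (0 : ℝ)..1, (φ t + φ (1 - t)) :=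
      intervalIntegral.integral_mono_on zero_le_one intervalIntegrable_const (hφ.add hφ') h
    _ = 2 * ∫ t in (0 : ℝ)..1, φ t := by
      rw [intervalIntegral.integral_add hφ hφ', hsymm, two_mul]

lemma IntervalIntegrable.comp_mul_add_one_sub_mul {F : ℝ → ℝ} {x y : ℝ} (hxy : x ≠ y)
    (hF : IntervalIntegrable F volume x y) :
    IntervalIntegrable (fun t => F (t * x + (1 - t) * y)) volume 0 1 := by
  have h := (hF.comp_add_right y).comp_mul_left (c := x - y)
  rw [sub_self, zero_div, div_self (sub_ne_zero.mpr hxy)] at h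
  exact h.symm.congr fun t _ => congrArg F (by ring)

lemma integral_comp_mul_add_one_sub_mul (F : ℝ → ℝ) {x y : ℝ} (hxy : x ≠ y) :
    ∫ t in (0 : ℝ)..1, F (t * x + (1 - t) * y) = (y - x)⁻¹ * ∫ z in x..y, F z := by
  have h := intervalIntegral.integral_comp_mul_add F (sub_ne_zero.mpr hxy) y (a := 0) (b := 1)
  simp only [mul_zero, zero_add, mul_one, sub_add_cancel, smul_eq_mul] at h
  rw [intervalIntegral.integral_symm y x, ← neg_sub x y, inv_neg, neg_mul_neg, ← h]
  exact intervalIntegral.integral_congr fun t _ => congrArg F (by ring)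

lemma integral_mul_rpow {s : ℝ} (hs : -1 < s) :
    ∫ t in (0 : ℝ)..1, t * t ^ s = 1 / (s + 2) := by
  have h : EqOn (fun t : ℝ => t * t ^ s) (fun t => t ^ (s + 1)) (uIcc 0 1) := fun t ht => by
    show t * t ^ s = t ^ (s + 1)
    rw [Real.rpow_add_one' (by simp_all [uIcc_of_le]) (by linarith), mul_comm]
  rw [intervalIntegral.integral_congr h, integral_rpow (Or.inl (by linarith)),
    Real.one_rpow, Real.zero_rpow (by linarith)]
  ring_nf

lemma integral_one_sub_mul_rpow {s : ℝ} (hs : -1 < s) :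
    ∫ t in (0 : ℝ)..1, (1 - t) * t ^ s = 1 / ((s + 1) * (s + 2)) := by
  have h1 : IntervalIntegrable (fun t : ℝ => t ^ s) volume 0 1 :=
    intervalIntegral.intervalIntegrable_rpow' hs
  have h2 : IntervalIntegrable (fun t : ℝ => t * t ^ s) volume 0 1 :=
    h1.continuousOn_mul continuousOn_id
  simp only [sub_mul, one_mul]
  rw [intervalIntegral.integral_sub h1 h2, integral_mul_rpow hs, integral_rpow (Or.inl hs),
    Real.one_rpow, Real.zero_rpow (by linarith)]
  have : s + 1 ≠ 0 := by linarith
  have : s + 2 ≠ 0 := by linarith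
  field_simp
  ring

/-- Symmetrised under `t ↦ 1 - t`, this is the bound for `2 * 2 ^ s * f m * g m` (`m` the midpoint)
given by the midpoint inequalities at `t * x + (1 - t) * y` and `t * y + (1 - t) * x`, with the
cross terms bounded by convexity between the endpoints. -/
noncomputable def hadamardIntegrand (f g : ℝ → ℝ) (s x y t : ℝ) : ℝ :=
  f (t * x + (1 - t) * y) * g (t * x + (1 - t) * y) +
    (f x * g x + f y * g y) * ((1 - t) * t ^ s) + (f x * g y + f y * g x) * (t * t ^ s)

section

variable {f g : ℝ → ℝ} {s x y : ℝ} {S : Set ℝ}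

lemma intervalIntegrable_hadamardIntegrand (hxy : x ≠ y) (hs : -1 < s)
    (hfg : IntervalIntegrable (fun z => f z * g z) volume x y) :
    IntervalIntegrable (hadamardIntegrand f g s x y) volume 0 1 := by
  have hpow : IntervalIntegrable (fun t : ℝ => t ^ s) volume 0 1 :=
    intervalIntegral.intervalIntegrable_rpow' hs
  exact ((hfg.comp_mul_add_one_sub_mul hxy).add
    ((hpow.continuousOn_mul (by fun_prop)).const_mul _)).add
    ((hpow.continuousOn_mul (g := fun t => t) (by fun_prop)).const_mul _)

lemma integral_hadamardIntegrand (hxy : x ≠ y) (hs : -1 < s)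
    (hfg : IntervalIntegrable (fun z => f z * g z) volume x y) :
    ∫ t in (0 : ℝ)..1, hadamardIntegrand f g s x y t =
      (y - x)⁻¹ * (∫ z in x..y, f z * g z) +
        (f x * g x + f y * g y) / ((s + 1) * (s + 2)) + (f x * g y + f y * g x) / (s + 2) := by
  have hpow : IntervalIntegrable (fun t : ℝ => t ^ s) volume 0 1 :=
    intervalIntegral.intervalIntegrable_rpow' hs
  have h1 := hfg.comp_mul_add_one_sub_mul hxy
  have h2 := (hpow.continuousOn_mul (g := fun t => 1 - t) (by fun_prop)).const_mul
    (f x * g x + f y * g y)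
  have h3 := (hpow.continuousOn_mul (g := fun t => t) (by fun_prop)).const_mul
    (f x * g y + f y * g x)
  unfold hadamardIntegrand
  rw [intervalIntegral.integral_add (h1.add h2) h3, intervalIntegral.integral_add h1 h2,
    intervalIntegral.integral_const_mul, intervalIntegral.integral_const_mul,
    integral_comp_mul_add_one_sub_mul (fun z => f z * g z) hxy, integral_one_sub_mul_rpow hs,
    integral_mul_rpow hs]
  ring

lemma IsSConvexOn.two_mul_rpow_mul_mul_midpoint_le_hadamardIntegrand
    (hg : IsSConvexOn s S g) (hg0 : ∀ x ∈ S, 0 ≤ g x) (hf : ConvexOn ℝ S f)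
    (hf0 : ∀ x ∈ S, 0 ≤ f x) (hx : x ∈ S) (hy : y ∈ S) {t : ℝ} (ht : t ∈ Icc (0 : ℝ) 1) :
    2 * 2 ^ s * (f ((x + y) / 2) * g ((x + y) / 2)) ≤
      hadamardIntegrand f g s x y t + hadamardIntegrand f g s x y (1 - t) := by
  have hu : t * x + (1 - t) * y ∈ S := hf.1 hx hy ht.1 (by linarith [ht.2]) (by ring)
  have hv : t * y + (1 - t) * x ∈ S := hf.1 hy hx ht.1 (by linarith [ht.2]) (by ring)
  have hmid := hg.two_mul_rpow_mul_mul_midpoint_le hg0 hf hf0 hu hv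
  rw [show (t * x + (1 - t) * y + (t * y + (1 - t) * x)) / 2 = (x + y) / 2 by ring] at hmid
  have hcross₁ := hg.apply_mul_apply_swap_le hg0 hf hf0 hx hy ht
  have hcross₂ := hg.apply_mul_apply_swap_le hg0 hf hf0 hy hx ht
  simp only [hadamardIntegrand, sub_sub_cancel,
    show (1 - t) * x + t * y = t * y + (1 - t) * x by ring]
  linear_combination hmid + hcross₁ + hcross₂

end

theorem product_hadamard_midpoint_general
    (a b s : ℝ) (f g : ℝ → ℝ)
    (hab : a < b)
    (hs : s ∈ Set.Ioo (0:ℝ) 1)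
    (hfg : IntervalIntegrable (fun x => f x * g x) volume a b)
    (hf : ConvexOn ℝ (Set.Icc a b) f)
    (hf0 : ∀ x ∈ Set.Icc a b, 0 ≤ f x)
    (hgs : ∀ x ∈ Set.Icc a b, ∀ y ∈ Set.Icc a b, ∀ l ∈ Set.Icc (0:ℝ) 1,
      g (l * x + (1 - l) * y) ≤ l ^ s * g x + (1 - l) ^ s * g y) :
    2 ^ s * f ((a + b) / 2) * g ((a + b) / 2) -
        (1 / (b - a)) * ∫ x in a..b, f x * g x ≤
      (1 / ((s + 1) * (s + 2))) * (f a * g a + f b * g b) +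
        (1 / (s + 2)) * (f a * g b + f b * g a) := by
  have hg : IsSConvexOn s (Icc a b) g := hgs
  have hg0 : ∀ x ∈ Icc a b, 0 ≤ g x := fun x hx => hg.nonneg hs.2 hx
  have hs_gt : -1 < s := by linarith [hs.1]
  have h := le_two_mul_integral_of_le_add_comp_one_sub
    (intervalIntegrable_hadamardIntegrand hab.ne hs_gt hfg) fun t ht =>
      hg.two_mul_rpow_mul_mul_midpoint_le_hadamardIntegrand hg0 hf hf0
        (left_mem_Icc.2 hab.le) (right_mem_Icc.2 hab.le) ht
  rw [integral_hadamardIntegrand hab.ne hs_gt hfg] at h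
  linear_combination h / 2

theorem product_hadamard_midpoint
    (a b s : ℝ) (f g : ℝ → ℝ)
    (ha : 0 ≤ a) (hb : 0 ≤ b) (hab : a < b)
    (hs : s ∈ Set.Ioo (0:ℝ) 1)
    (hg : IntervalIntegrable g volume a b)
    (hfg : IntervalIntegrable (fun x => f x * g x) volume a b)
    (hf : ConvexOn ℝ (Set.Icc a b) f)
    (hf0 : ∀ x ∈ Set.Icc a b, 0 ≤ f x)
    (hgs : ∀ x ∈ Set.Icc a b, ∀ y ∈ Set.Icc a b, ∀ l ∈ Set.Icc (0:ℝ) 1,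
      g (l * x + (1 - l) * y) ≤ l ^ s * g x + (1 - l) ^ s * g y) :
    2 ^ s * f ((a + b) / 2) * g ((a + b) / 2) -
        (1 / (b - a)) * ∫ x in a..b, f x * g x ≤
      (1 / ((s + 1) * (s + 2))) * (f a * g a + f b * g b) +
        (1 / (s + 2)) * (f a * g b + f b * g a) :=
  product_hadamard_midpoint_general a b s f g hab hs hfg hf hf0 hgs
end

section
/- A function f : Δ = [a,b]×[c,d] → ℝ is convex on the co-ordinates if and only if f(tx+(1-t)y, su+(1-s)w) ≤ ts f(x,u) + t(1-s) f(x,w) + s(1-t) f(y,u) + (1-t)(1-s) f(y,w) for all t, s ∈ [0,1] and (x,u),(x,w),(y,u),(y,w) ∈ Δ. -/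
open Set

theorem coordinate_convex_iff
    (a b c d : ℝ) (hab : a < b) (hcd : c < d) (f : ℝ → ℝ → ℝ) :
    ((∀ y ∈ Set.Icc c d, ConvexOn ℝ (Set.Icc a b) (fun x => f x y)) ∧
      (∀ x ∈ Set.Icc a b, ConvexOn ℝ (Set.Icc c d) (fun y => f x y))) ↔
    (∀ t ∈ Set.Icc (0:ℝ) 1, ∀ s ∈ Set.Icc (0:ℝ) 1,
      ∀ x ∈ Set.Icc a b, ∀ y ∈ Set.Icc a b, ∀ u ∈ Set.Icc c d, ∀ w ∈ Set.Icc c d,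
      f (t * x + (1 - t) * y) (s * u + (1 - s) * w) ≤
        t * s * f x u + t * (1 - s) * f x w + s * (1 - t) * f y u +
          (1 - t) * (1 - s) * f y w) := by
  constructor
  · rintro ⟨hX, hY⟩ t ⟨ht0, ht1⟩ s ⟨hs0, hs1⟩ x hx y hy u hu w hw
    have hYmem : s * u + (1 - s) * w ∈ Set.Icc c d :=
      (convex_Icc c d) hu hw hs0 (by linarith) (by linarith)
    have h1 := (hX _ hYmem).2 hx hy ht0 (by linarith : (0:ℝ) ≤ 1 - t) (by ring)
    have h2 := (hY x hx).2 hu hw hs0 (by linarith : (0:ℝ) ≤ 1 - s) (by ring)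
    have h3 := (hY y hy).2 hu hw hs0 (by linarith : (0:ℝ) ≤ 1 - s) (by ring)
    simp only [smul_eq_mul] at h1 h2 h3
    nlinarith [mul_le_mul_of_nonneg_left h2 ht0,
      mul_le_mul_of_nonneg_left h3 (by linarith : (0:ℝ) ≤ 1 - t)]
  · intro H
    constructor
    · intro y hy
      refine ⟨convex_Icc a b, ?_⟩
      intro x hx x' hx' p q hp hq hpq
      have := H p ⟨hp, by linarith⟩ 1 ⟨zero_le_one, le_refl 1⟩ x hx x' hx' y hy y hy
      simp only [smul_eq_mul]
      have hq' : 1 - p = q := by linarith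
      rw [hq'] at this
      norm_num at this
      linarith
    · intro x hx
      refine ⟨convex_Icc c d, ?_⟩
      intro u hu u' hu' p q hp hq hpq
      have := H 1 ⟨zero_le_one, le_refl 1⟩ p ⟨hp, by linarith⟩ x hx x hx u hu u' hu'
      simp only [smul_eq_mul]
      have hq' : 1 - p = q := by linarith
      rw [hq'] at this
      norm_num at this
      linarith
end

section
/- If f : Δ = [a,b]×[c,d] → ℝ is convex on the co-ordinates on Δ (with a < b, c < d), then f((a+b)/2, (c+d)/2) ≤ (1/((b-a)(d-c))) ∫_a^b ∫_c^d f(x,y) dy dx ≤ (f(a,c)+f(a,d)+f(b,c)+f(b,d))/4. -/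
/-!
The partial integral `x ↦ ∫ y in c..d, f x y` is convex on `[a, b]`, as an integral of convex
functions. The one-variable Hermite–Hadamard inequalities for it, followed by those for
`y ↦ f x y` at `x = (a + b) / 2`, `a` and `b`, give both bounds. In one variable, both
inequalities come from integrating the symmetrisation `(g x + g (a + b - x)) / 2`, which lies
between `g ((a + b) / 2)` and `(g a + g b) / 2`.
-/

open MeasureTheory Set

namespace ConvexOn

variable {a b : ℝ} {g : ℝ → ℝ}

lemma comp_reflect (hg : ConvexOn ℝ (Icc a b) g) :
    ConvexOn ℝ (Icc a b) fun x => g (a + b - x) := by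
  refine (hg.comp_affineMap (AffineMap.const ℝ ℝ (a + b) - AffineMap.id ℝ ℝ)).subset ?_
    (convex_Icc a b)
  intro x hx
  simp only [mem_preimage, AffineMap.coe_sub, AffineMap.coe_const, AffineMap.coe_id,
    Pi.sub_apply, Function.const_apply, id_eq]
  exact ⟨by linarith [hx.2], by linarith [hx.1]⟩

lemma two_mul_map_midpoint_le (hg : ConvexOn ℝ (Icc a b) g) {x : ℝ} (hx : x ∈ Icc a b) :
    2 * g ((a + b) / 2) ≤ g x + g (a + b - x) := by
  have hx' : a + b - x ∈ Icc a b := ⟨by linarith [hx.2], by linarith [hx.1]⟩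
  have h := hg.2 hx hx' (by norm_num : (0 : ℝ) ≤ 1 / 2) (by norm_num : (0 : ℝ) ≤ 1 / 2)
    (by norm_num)
  simp only [smul_eq_mul] at h
  calc 2 * g ((a + b) / 2) = 2 * g (1 / 2 * x + 1 / 2 * (a + b - x)) := by ring_nf
    _ ≤ g x + g (a + b - x) := by linarith

-- `x ↦ g x + g (a + b - x)` is convex and takes the value `g a + g b` at both endpoints.
lemma add_comp_reflect_le (hg : ConvexOn ℝ (Icc a b) g) {x : ℝ} (hx : x ∈ Icc a b) :
    g x + g (a + b - x) ≤ g a + g b := by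
  have hab : a ≤ b := hx.1.trans hx.2
  have h := (hg.add hg.comp_reflect).le_on_segment (left_mem_Icc.2 hab)
    (right_mem_Icc.2 hab) (by rwa [segment_eq_Icc hab])
  simpa [add_comm (g b)] using h

lemma integrableOn_Icc (hg : ConvexOn ℝ (Icc a b) g) : IntegrableOn g (Icc a b) := by
  rcases lt_or_ge b a with hba | hab
  · simp [Icc_eq_empty_of_lt hba]
  have hmeas : AEStronglyMeasurable g (volume.restrict (Icc a b)) := by
    rw [← Measure.restrict_congr_set Ioo_ae_eq_Icc]
    refine ContinuousOn.aestronglyMeasurable ?_ measurableSet_Ioo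
    simpa only [interior_Icc] using hg.continuousOn_interior
  set M := max (g a) (g b)
  have hle : ∀ x ∈ Icc a b, g x ≤ M := fun x hx =>
    hg.le_on_segment (left_mem_Icc.2 hab) (right_mem_Icc.2 hab) (by rwa [segment_eq_Icc hab])
  have hge : ∀ x ∈ Icc a b, 2 * g ((a + b) / 2) - M ≤ g x := fun x hx => by
    have := hle (a + b - x) ⟨by linarith [hx.2], by linarith [hx.1]⟩
    linarith [hg.two_mul_map_midpoint_le hx]
  refine IntegrableOn.of_bound (by simp) hmeas (max |2 * g ((a + b) / 2) - M| |M|) ?_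
  filter_upwards [ae_restrict_mem measurableSet_Icc] with x hx
  exact abs_le_max_abs_abs (hge x hx) (hle x hx)

lemma intervalIntegrable (hg : ConvexOn ℝ (Icc a b) g) (hab : a ≤ b) :
    IntervalIntegrable g volume a b :=
  (intervalIntegrable_iff_integrableOn_Icc_of_le hab).2 hg.integrableOn_Icc

lemma intervalIntegral_add_comp_reflect (hg : ConvexOn ℝ (Icc a b) g) (hab : a ≤ b) :
    ∫ x in a..b, (g x + g (a + b - x)) = 2 * ∫ x in a..b, g x := by
  rw [intervalIntegral.integral_add (hg.intervalIntegrable hab)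
    (hg.comp_reflect.intervalIntegrable hab), intervalIntegral.integral_comp_sub_left]
  simp only [add_sub_cancel_right, add_sub_cancel_left]
  ring

lemma mul_map_midpoint_le_intervalIntegral (hg : ConvexOn ℝ (Icc a b) g) (hab : a ≤ b) :
    (b - a) * g ((a + b) / 2) ≤ ∫ x in a..b, g x := by
  have h : ∫ x in a..b, 2 * g ((a + b) / 2) ≤ ∫ x in a..b, (g x + g (a + b - x)) :=
    intervalIntegral.integral_mono_on hab intervalIntegrable_const
      ((hg.intervalIntegrable hab).add (hg.comp_reflect.intervalIntegrable hab))
      fun x hx => hg.two_mul_map_midpoint_le hx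
  rw [intervalIntegral.integral_const, hg.intervalIntegral_add_comp_reflect hab,
    smul_eq_mul] at h
  linarith

lemma intervalIntegral_le_mul_add (hg : ConvexOn ℝ (Icc a b) g) (hab : a ≤ b) :
    ∫ x in a..b, g x ≤ (b - a) * (g a + g b) / 2 := by
  have h : ∫ x in a..b, (g x + g (a + b - x)) ≤ ∫ x in a..b, (g a + g b) :=
    intervalIntegral.integral_mono_on hab
      ((hg.intervalIntegrable hab).add (hg.comp_reflect.intervalIntegrable hab))
      intervalIntegrable_const fun x hx => hg.add_comp_reflect_le hx
  rw [intervalIntegral.integral_const, hg.intervalIntegral_add_comp_reflect hab,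
    smul_eq_mul] at h
  linarith

end ConvexOn

lemma convexOn_integral_of_ae_convexOn {E α : Type*} [AddCommGroup E] [Module ℝ E]
    [MeasurableSpace α] {μ : Measure α} {s : Set E} {f : E → α → ℝ} (hs : Convex ℝ s)
    (hf : ∀ᵐ y ∂μ, ConvexOn ℝ s fun x => f x y) (hi : ∀ x ∈ s, Integrable (f x) μ) :
    ConvexOn ℝ s fun x => ∫ y, f x y ∂μ := by
  refine ⟨hs, fun x hx x' hx' t u ht hu htu => ?_⟩
  calc ∫ y, f (t • x + u • x') y ∂μ ≤ ∫ y, (t * f x y + u * f x' y) ∂μ :=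
        integral_mono_ae (hi _ (hs hx hx' ht hu htu))
          (((hi x hx).const_mul t).add ((hi x' hx').const_mul u))
          (hf.mono fun y hy => hy.2 hx hx' ht hu htu)
    _ = t • ∫ y, f x y ∂μ + u • ∫ y, f x' y ∂μ := by
        rw [integral_add ((hi x hx).const_mul t) ((hi x' hx').const_mul u),
          integral_const_mul, integral_const_mul, smul_eq_mul, smul_eq_mul]

lemma convexOn_intervalIntegral {E : Type*} [AddCommGroup E] [Module ℝ E] {s : Set E}
    {c d : ℝ} {f : E → ℝ → ℝ} (hcd : c ≤ d) (hf : ∀ y ∈ Icc c d, ConvexOn ℝ s fun x => f x y)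
    (hi : ∀ x ∈ s, IntervalIntegrable (f x) volume c d) :
    ConvexOn ℝ s fun x => ∫ y in c..d, f x y := by
  simp only [intervalIntegral.integral_of_le hcd]
  refine convexOn_integral_of_ae_convexOn (hf c (left_mem_Icc.2 hcd)).1 ?_
    fun x hx => (hi x hx).1
  filter_upwards [ae_restrict_mem measurableSet_Ioc] with y hy
  exact hf y (Ioc_subset_Icc_self hy)

theorem hadamard_coordinates_general
    (a b c d : ℝ) (hab : a < b) (hcd : c < d) (f : ℝ → ℝ → ℝ)
    (hfx : ∀ y ∈ Set.Icc c d, ConvexOn ℝ (Set.Icc a b) (fun x => f x y))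
    (hfy : ∀ x ∈ Set.Icc a b, ConvexOn ℝ (Set.Icc c d) (fun y => f x y)) :
    f ((a + b) / 2) ((c + d) / 2) ≤
        (1 / ((b - a) * (d - c))) * ∫ x in a..b, ∫ y in c..d, f x y ∧
      (1 / ((b - a) * (d - c))) * (∫ x in a..b, ∫ y in c..d, f x y) ≤
        (f a c + f a d + f b c + f b d) / 4 := by
  have hG : ConvexOn ℝ (Icc a b) fun x => ∫ y in c..d, f x y :=
    convexOn_intervalIntegral hcd.le hfx fun x hx => (hfy x hx).intervalIntegrable hcd.le
  have hk : 0 < (b - a) * (d - c) := mul_pos (by linarith) (by linarith)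
  have hmid : (a + b) / 2 ∈ Icc a b := ⟨by linarith, by linarith⟩
  rw [one_div, inv_mul_eq_div, le_div_iff₀ hk, div_le_iff₀ hk]
  constructor
  · calc f ((a + b) / 2) ((c + d) / 2) * ((b - a) * (d - c))
        = (b - a) * ((d - c) * f ((a + b) / 2) ((c + d) / 2)) := by ring
      _ ≤ (b - a) * ∫ y in c..d, f ((a + b) / 2) y := by
          gcongr
          exact (hfy _ hmid).mul_map_midpoint_le_intervalIntegral hcd.le
      _ ≤ ∫ x in a..b, ∫ y in c..d, f x y := hG.mul_map_midpoint_le_intervalIntegral hab.le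
  · calc ∫ x in a..b, ∫ y in c..d, f x y
        ≤ (b - a) * ((∫ y in c..d, f a y) + ∫ y in c..d, f b y) / 2 :=
          hG.intervalIntegral_le_mul_add hab.le
      _ ≤ (b - a) * ((d - c) * (f a c + f a d) / 2 + (d - c) * (f b c + f b d) / 2) / 2 := by
          gcongr
          · exact (hfy a (left_mem_Icc.2 hab.le)).intervalIntegral_le_mul_add hcd.le
          · exact (hfy b (right_mem_Icc.2 hab.le)).intervalIntegral_le_mul_add hcd.le
      _ = (f a c + f a d + f b c + f b d) / 4 * ((b - a) * (d - c)) := by ring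

theorem hadamard_coordinates
    (a b c d : ℝ) (hab : a < b) (hcd : c < d) (f : ℝ → ℝ → ℝ)
    (hint : IntegrableOn (fun p : ℝ × ℝ => f p.1 p.2)
      (Set.Icc a b ×ˢ Set.Icc c d) volume)
    (hfx : ∀ y ∈ Set.Icc c d, ConvexOn ℝ (Set.Icc a b) (fun x => f x y))
    (hfy : ∀ x ∈ Set.Icc a b, ConvexOn ℝ (Set.Icc c d) (fun y => f x y)) :
    f ((a + b) / 2) ((c + d) / 2) ≤
        (1 / ((b - a) * (d - c))) * ∫ x in a..b, ∫ y in c..d, f x y ∧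
      (1 / ((b - a) * (d - c))) * (∫ x in a..b, ∫ y in c..d, f x y) ≤
        (f a c + f a d + f b c + f b d) / 4 :=
  hadamard_coordinates_general a b c d hab hcd f hfx hfy
end

section
/- If f, g : Δ = [a,b]×[c,d] → [0,∞) are convex on the co-ordinates on Δ (a < b, c < d) with f·g integrable, then (1/((b-a)(d-c))) ∫_a^b ∫_c^d f(x,y)g(x,y) dy dx ≤ (1/9)L + (1/18)M + (1/36)N, where L = f(a,c)g(a,c)+f(b,c)g(b,c)+f(a,d)g(a,d)+f(b,d)g(b,d), M = f(a,c)g(a,d)+f(a,d)g(a,c)+f(b,c)g(b,d)+f(b,d)g(b,c)+f(b,c)g(a,c)+f(b,d)g(a,d)+f(a,c)g(b,c)+f(a,d)g(b,d), and N = f(b,c)g(a,d)+f(b,d)g(a,c)+f(a,c)g(b,d)+f(a,d)g(b,c). -/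
/-!
Coordinatewise convexity, applied first in `y` and then in `x` at `y = c` and `y = d`, bounds
`f` on the rectangle by the bilinear interpolation of its four corner values, and likewise `g`.
Since `f` and `g` are nonnegative, `f * g` is bounded by the product of the two interpolants, a
polynomial whose integral over the rectangle is exactly `(b - a) * (d - c)` times the right-hand
side: the weights `1/9, 1/18, 1/36` are the products of the one-dimensional moments
`∫₀¹ (1 - t)² = ∫₀¹ t² = 1/3` and `∫₀¹ t (1 - t) = 1/6`.
-/

open MeasureTheory Set

noncomputable def linInterp (a b u v x : ℝ) : ℝ :=
  (b - x) / (b - a) * u + (x - a) / (b - a) * v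

noncomputable def bilinInterp (a b c d : ℝ) (f : ℝ → ℝ → ℝ) (x y : ℝ) : ℝ :=
  linInterp c d (linInterp a b (f a c) (f b c) x) (linInterp a b (f a d) (f b d) x) y

@[fun_prop]
theorem Continuous.linInterp {X : Type*} [TopologicalSpace X] {u v x : X → ℝ} (a b : ℝ)
    (hu : Continuous u) (hv : Continuous v) (hx : Continuous x) :
    Continuous fun p => linInterp a b (u p) (v p) (x p) := by
  unfold _root_.linInterp
  fun_prop

theorem linInterp_le_linInterp {a b u v u' v' x : ℝ} (hx : x ∈ Icc a b) (hu : u ≤ u')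
    (hv : v ≤ v') : linInterp a b u v x ≤ linInterp a b u' v' x := by
  have hba : 0 ≤ b - a := by linarith [hx.1, hx.2]
  unfold linInterp
  gcongr
  · exact div_nonneg (by linarith [hx.2]) hba
  · exact div_nonneg (by linarith [hx.1]) hba

theorem ConvexOn.le_linInterp {φ : ℝ → ℝ} {a b x : ℝ} (hab : a < b)
    (hφ : ConvexOn ℝ (Icc a b) φ) (hx : x ∈ Icc a b) :
    φ x ≤ linInterp a b (φ a) (φ b) x := by
  have hba : 0 < b - a := sub_pos.2 hab
  have hx_eq : ((b - x) / (b - a)) • a + ((x - a) / (b - a)) • b = x := by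
    simp only [smul_eq_mul]
    field_simp
    ring
  have hsum : (b - x) / (b - a) + (x - a) / (b - a) = 1 := by
    field_simp
    ring
  have h := hφ.2 (left_mem_Icc.2 hab.le) (right_mem_Icc.2 hab.le)
    (div_nonneg (by linarith [hx.2]) hba.le) (div_nonneg (by linarith [hx.1]) hba.le) hsum
  rwa [hx_eq] at h

theorem le_bilinInterp {a b c d x y : ℝ} {f : ℝ → ℝ → ℝ} (hab : a < b) (hcd : c < d)
    (hfc : ConvexOn ℝ (Icc a b) (fun x => f x c)) (hfd : ConvexOn ℝ (Icc a b) (fun x => f x d))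
    (hfy : ConvexOn ℝ (Icc c d) (fun y => f x y)) (hx : x ∈ Icc a b) (hy : y ∈ Icc c d) :
    f x y ≤ bilinInterp a b c d f x y :=
  (hfy.le_linInterp hcd hy).trans <|
    linInterp_le_linInterp hy (hfc.le_linInterp hab hx) (hfd.le_linInterp hab hx)

theorem integral_quadratic (a b p q r : ℝ) :
    ∫ x in a..b, (p + q * x + r * x ^ 2) =
      p * (b - a) + q * (b ^ 2 - a ^ 2) / 2 + r * (b ^ 3 - a ^ 3) / 3 := by
  rw [intervalIntegral.integral_add, intervalIntegral.integral_add, intervalIntegral.integral_const,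
    intervalIntegral.integral_const_mul, intervalIntegral.integral_const_mul, integral_id,
    integral_pow, smul_eq_mul]
  · ring
  all_goals exact (by fun_prop : Continuous _).intervalIntegrable _ _

theorem integral_linInterp_mul_linInterp {a b : ℝ} (hab : a ≠ b) (u v u' v' : ℝ) :
    ∫ x in a..b, linInterp a b u v x * linInterp a b u' v' x =
      (b - a) * (u * u' / 3 + (u * v' + v * u') / 6 + v * v' / 3) := by
  have hba : b - a ≠ 0 := sub_ne_zero.2 hab.symm
  have hquadratic : ∀ x, linInterp a b u v x * linInterp a b u' v' x =
      (b * u - a * v) * (b * u' - a * v') / (b - a) ^ 2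
        + ((b * u - a * v) * (v' - u') + (v - u) * (b * u' - a * v')) / (b - a) ^ 2 * x
        + (v - u) * (v' - u') / (b - a) ^ 2 * x ^ 2 := by
    intro x
    unfold linInterp
    field_simp
    ring
  simp only [hquadratic, integral_quadratic]
  field_simp
  ring

theorem integral_integral_bilinInterp_mul {a b c d : ℝ} (hab : a ≠ b) (hcd : c ≠ d)
    (f g : ℝ → ℝ → ℝ) :
    ∫ x in a..b, ∫ y in c..d, bilinInterp a b c d f x y * bilinInterp a b c d g x y =
      (b - a) * (d - c) *
        ((1 / 9) * (f a c * g a c + f b c * g b c + f a d * g a d + f b d * g b d) +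
        (1 / 18) * (f a c * g a d + f a d * g a c + f b c * g b d + f b d * g b c +
          f b c * g a c + f b d * g a d + f a c * g b c + f a d * g b d) +
        (1 / 36) * (f b c * g a d + f b d * g a c + f a c * g b d + f a d * g b c)) := by
  simp only [bilinInterp, integral_linInterp_mul_linInterp hcd, add_div]
  rw [intervalIntegral.integral_const_mul, intervalIntegral.integral_add,
    intervalIntegral.integral_add, intervalIntegral.integral_add]
  · simp only [intervalIntegral.integral_div, integral_linInterp_mul_linInterp hab]
    ring
  all_goals exact (by fun_prop : Continuous _).intervalIntegrable _ _

theorem intervalIntegral.integral_mono_on_of_nonneg {μ : Measure ℝ} {f g : ℝ → ℝ} {a b : ℝ}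
    (hab : a ≤ b) (hf : ∀ x ∈ Icc a b, 0 ≤ f x) (hg : IntervalIntegrable g μ a b)
    (h : ∀ x ∈ Icc a b, f x ≤ g x) :
    ∫ x in a..b, f x ∂μ ≤ ∫ x in a..b, g x ∂μ := by
  rw [intervalIntegral.integral_of_le hab, intervalIntegral.integral_of_le hab]
  refine integral_mono_of_nonneg ?_ hg.1 ?_ <;>
    refine ae_restrict_of_forall_mem measurableSet_Ioc fun x hx => ?_
  exacts [hf x (Ioc_subset_Icc_self hx), h x (Ioc_subset_Icc_self hx)]

theorem product_hadamard_coordinates_general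
    (a b c d : ℝ) (hab : a < b) (hcd : c < d) (f g : ℝ → ℝ → ℝ)
    (hf0 : ∀ x ∈ Set.Icc a b, ∀ y ∈ Set.Icc c d, 0 ≤ f x y)
    (hg0 : ∀ x ∈ Set.Icc a b, ∀ y ∈ Set.Icc c d, 0 ≤ g x y)
    (hfx : ∀ y ∈ Set.Icc c d, ConvexOn ℝ (Set.Icc a b) (fun x => f x y))
    (hfy : ∀ x ∈ Set.Icc a b, ConvexOn ℝ (Set.Icc c d) (fun y => f x y))
    (hgx : ∀ y ∈ Set.Icc c d, ConvexOn ℝ (Set.Icc a b) (fun x => g x y))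
    (hgy : ∀ x ∈ Set.Icc a b, ConvexOn ℝ (Set.Icc c d) (fun y => g x y)) :
    (1 / ((b - a) * (d - c))) * ∫ x in a..b, ∫ y in c..d, f x y * g x y ≤
      (1 / 9) * (f a c * g a c + f b c * g b c + f a d * g a d + f b d * g b d) +
      (1 / 18) * (f a c * g a d + f a d * g a c + f b c * g b d + f b d * g b c +
        f b c * g a c + f b d * g a d + f a c * g b c + f a d * g b d) +
      (1 / 36) * (f b c * g a d + f b d * g a c + f a c * g b d + f a d * g b c) := by
  have hc : c ∈ Icc c d := left_mem_Icc.2 hcd.le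
  have hd : d ∈ Icc c d := right_mem_Icc.2 hcd.le
  have hfg : ∀ x ∈ Icc a b, ∀ y ∈ Icc c d,
      f x y * g x y ≤ bilinInterp a b c d f x y * bilinInterp a b c d g x y := by
    intro x hx y hy
    have hf := le_bilinInterp hab hcd (hfx c hc) (hfx d hd) (hfy x hx) hx hy
    have hg := le_bilinInterp hab hcd (hgx c hc) (hgx d hd) (hgy x hx) hx hy
    exact mul_le_mul hf hg (hg0 x hx y hy) ((hf0 x hx y hy).trans hf)
  have harea : 0 < (b - a) * (d - c) := mul_pos (sub_pos.2 hab) (sub_pos.2 hcd)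
  calc _ ≤ 1 / ((b - a) * (d - c)) * ∫ x in a..b, ∫ y in c..d,
          bilinInterp a b c d f x y * bilinInterp a b c d g x y := by
        refine mul_le_mul_of_nonneg_left ?_ (one_div_pos.2 harea).le
        refine intervalIntegral.integral_mono_on_of_nonneg hab.le
          (fun x hx => intervalIntegral.integral_nonneg hcd.le fun y hy =>
            mul_nonneg (hf0 x hx y hy) (hg0 x hx y hy))
          ((by unfold bilinInterp; fun_prop : Continuous _).intervalIntegrable _ _)
          (fun x hx => intervalIntegral.integral_mono_on_of_nonneg hcd.le
            (fun y hy => mul_nonneg (hf0 x hx y hy) (hg0 x hx y hy))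
            ((by unfold bilinInterp; fun_prop : Continuous _).intervalIntegrable _ _) (hfg x hx))
    _ = _ := by
        rw [integral_integral_bilinInterp_mul hab.ne hcd.ne, ← mul_assoc,
          one_div_mul_cancel harea.ne', one_mul]

theorem product_hadamard_coordinates
    (a b c d : ℝ) (hab : a < b) (hcd : c < d) (f g : ℝ → ℝ → ℝ)
    (hf0 : ∀ x ∈ Set.Icc a b, ∀ y ∈ Set.Icc c d, 0 ≤ f x y)
    (hg0 : ∀ x ∈ Set.Icc a b, ∀ y ∈ Set.Icc c d, 0 ≤ g x y)
    (hfx : ∀ y ∈ Set.Icc c d, ConvexOn ℝ (Set.Icc a b) (fun x => f x y))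
    (hfy : ∀ x ∈ Set.Icc a b, ConvexOn ℝ (Set.Icc c d) (fun y => f x y))
    (hgx : ∀ y ∈ Set.Icc c d, ConvexOn ℝ (Set.Icc a b) (fun x => g x y))
    (hgy : ∀ x ∈ Set.Icc a b, ConvexOn ℝ (Set.Icc c d) (fun y => g x y))
    (hint : IntegrableOn (fun p : ℝ × ℝ => f p.1 p.2 * g p.1 p.2)
      (Set.Icc a b ×ˢ Set.Icc c d) volume) :
    (1 / ((b - a) * (d - c))) * ∫ x in a..b, ∫ y in c..d, f x y * g x y ≤
      (1 / 9) * (f a c * g a c + f b c * g b c + f a d * g a d + f b d * g b d) +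
      (1 / 18) * (f a c * g a d + f a d * g a c + f b c * g b d + f b d * g b c +
        f b c * g a c + f b d * g a d + f a c * g b c + f a d * g b d) +
      (1 / 36) * (f b c * g a d + f b d * g a c + f a c * g b d + f a d * g b c) :=
  product_hadamard_coordinates_general a b c d hab hcd f g hf0 hg0 hfx hfy hgx hgy
end

section
/- Let f : Δ = [a,b]×[c,d] ⊂ [0,∞)² → [0,∞) be convex on the co-ordinates and g : Δ → [0,∞) be s-convex in the second sense on the co-ordinates, with a < b, c < d, s ∈ (0,1], and f·g integrable on Δ. Then (1/((b-a)(d-c))) ∫_a^b ∫_c^d f(x,y)g(x,y) dy dx ≤ (1/(s+2)²)·([f(a,c)g(a,c)+f(b,c)g(b,c)] + [f(a,d)g(a,d)+f(b,d)g(b,d)]) + (1/((s+1)(s+2)²))·([f(a,c)g(b,c)+f(b,c)g(a,c)] + [f(a,d)g(b,d)+f(b,d)g(a,d)] + [f(a,c)g(a,d)+f(b,c)g(b,d)] + [f(a,d)g(a,c)+f(b,d)g(b,c)]) + (1/((s+1)²(s+2)²))·([f(a,c)g(b,d)+f(b,c)g(a,d)] + [f(a,d)g(b,c)+f(b,d)g(a,c)]).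 -/
open MeasureTheory Set intervalIntegral


private lemma contRpow {s : ℝ} (hs : 0 < s) : Continuous fun t : ℝ => t ^ s :=
  continuous_iff_continuousAt.2 fun x => Real.continuousAt_rpow_const x s (Or.inr hs.le)

private lemma intTs {s : ℝ} (hs : 0 < s) : ∫ t in (0:ℝ)..1, t ^ s = 1 / (s + 1) := by
  rw [integral_rpow (Or.inl (by linarith)), Real.one_rpow, Real.zero_rpow (by linarith)]
  ring

private lemma K1 {s : ℝ} (hs : 0 < s) : ∫ t in (0:ℝ)..1, t * t ^ s = 1 / (s + 2) := by
  have h : EqOn (fun t : ℝ => t * t ^ s) (fun t : ℝ => t ^ (s + 1)) (uIcc 0 1) := by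
    intro t _
    show t * t ^ s = t ^ (s + 1)
    rcases eq_or_ne t 0 with rfl | h0
    · simp [Real.zero_rpow (by linarith : s + 1 ≠ 0), Real.zero_rpow hs.ne']
    · rw [Real.rpow_add_one h0]; ring
  rw [intervalIntegral.integral_congr h,
    integral_rpow (Or.inl (by linarith)), Real.one_rpow, Real.zero_rpow (by linarith)]
  norm_num
  ring

private lemma K3 {s : ℝ} (hs : 0 < s) :
    ∫ t in (0:ℝ)..1, (1 - t) * t ^ s = 1 / ((s + 1) * (s + 2)) := by
  have e : (fun t : ℝ => (1 - t) * t ^ s) = fun t : ℝ => t ^ s - t * t ^ s := by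
    funext t; ring
  have i1 : IntervalIntegrable (fun t : ℝ => t ^ s) volume 0 1 :=
    (contRpow hs).intervalIntegrable _ _
  have i2 : IntervalIntegrable (fun t : ℝ => t * t ^ s) volume 0 1 :=
    (continuous_id.mul (contRpow hs)).intervalIntegrable _ _
  rw [e, intervalIntegral.integral_sub i1 i2, intTs hs, K1 hs]
  field_simp
  ring

private lemma K2 {s : ℝ} (hs : 0 < s) :
    ∫ t in (0:ℝ)..1, t * (1 - t) ^ s = 1 / ((s + 1) * (s + 2)) := by
  have h := intervalIntegral.integral_comp_sub_left (a := (0:ℝ)) (b := 1)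
    (fun u : ℝ => (1 - u) * u ^ s) 1
  norm_num at h
  rw [h, K3 hs]

private lemma K4 {s : ℝ} (hs : 0 < s) :
    ∫ t in (0:ℝ)..1, (1 - t) * (1 - t) ^ s = 1 / (s + 2) := by
  have h := intervalIntegral.integral_comp_sub_left (a := (0:ℝ)) (b := 1)
    (fun u : ℝ => u * u ^ s) 1
  norm_num at h
  rw [h, K1 hs]

private lemma affineInt {p q : ℝ} (hpq : p < q) (h : ℝ → ℝ) :
    ∫ x in p..q, h ((x - p) / (q - p)) = (q - p) * ∫ t in (0:ℝ)..1, h t := by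
  have hqp : (q - p) ≠ 0 := sub_ne_zero.2 hpq.ne'
  have key := intervalIntegral.integral_comp_mul_add (a := p) (b := q) h
    (inv_ne_zero hqp) (-(p * (q - p)⁻¹))
  have e : ∀ x : ℝ, (q - p)⁻¹ * x + -(p * (q - p)⁻¹) = (x - p) / (q - p) := by
    intro x; field_simp; ring
  simp only [e] at key
  have e1 : (p - p) / (q - p) = 0 := by simp
  have e2 : (q - p) / (q - p) = 1 := div_self hqp
  rw [e1, e2, smul_eq_mul, inv_inv] at key
  exact key

private lemma keyInt {s : ℝ} (hs : 0 < s) {p q : ℝ} (hpq : p < q) (A A' B B' : ℝ) :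
    (∫ x in p..q, ((x - p) / (q - p) * A + (1 - (x - p) / (q - p)) * A') *
      (((x - p) / (q - p)) ^ s * B + (1 - (x - p) / (q - p)) ^ s * B'))
    = (q - p) * (1 / (s + 2) * (A * B + A' * B')
        + 1 / ((s + 1) * (s + 2)) * (A * B' + A' * B)) := by
  rw [affineInt hpq (fun t => (t * A + (1 - t) * A') * (t ^ s * B + (1 - t) ^ s * B'))]
  have e : (fun t : ℝ => (t * A + (1 - t) * A') * (t ^ s * B + (1 - t) ^ s * B'))
      = fun t : ℝ => (t * t ^ s) * (A * B) + (t * (1 - t) ^ s) * (A * B')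
        + ((1 - t) * t ^ s) * (A' * B) + ((1 - t) * (1 - t) ^ s) * (A' * B') := by
    funext t; ring
  have c1 : Continuous fun t : ℝ => t * t ^ s := continuous_id.mul (contRpow hs)
  have c2 : Continuous fun t : ℝ => t * (1 - t) ^ s :=
    continuous_id.mul ((continuous_const.sub continuous_id).rpow_const
      (fun _ => Or.inr hs.le))
  have c3 : Continuous fun t : ℝ => (1 - t) * t ^ s :=
    (continuous_const.sub continuous_id).mul (contRpow hs)
  have c4 : Continuous fun t : ℝ => (1 - t) * (1 - t) ^ s :=
    (continuous_const.sub continuous_id).mul ((continuous_const.sub continuous_id).rpow_const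
      (fun _ => Or.inr hs.le))
  have i1 : IntervalIntegrable (fun t : ℝ => (t * t ^ s) * (A * B)) volume 0 1 :=
    (c1.mul continuous_const).intervalIntegrable _ _
  have i2 : IntervalIntegrable (fun t : ℝ => (t * (1 - t) ^ s) * (A * B')) volume 0 1 :=
    (c2.mul continuous_const).intervalIntegrable _ _
  have i3 : IntervalIntegrable (fun t : ℝ => ((1 - t) * t ^ s) * (A' * B)) volume 0 1 :=
    (c3.mul continuous_const).intervalIntegrable _ _
  have i4 : IntervalIntegrable (fun t : ℝ => ((1 - t) * (1 - t) ^ s) * (A' * B')) volume 0 1 :=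
    (c4.mul continuous_const).intervalIntegrable _ _
  rw [e, intervalIntegral.integral_add ((i1.add i2).add i3) i4,
    intervalIntegral.integral_add (i1.add i2) i3, intervalIntegral.integral_add i1 i2,
    intervalIntegral.integral_mul_const, intervalIntegral.integral_mul_const,
    intervalIntegral.integral_mul_const, intervalIntegral.integral_mul_const,
    K1 hs, K2 hs, K3 hs, K4 hs]
  ring

private noncomputable def lin (p q A A' x : ℝ) : ℝ :=
  (x - p) / (q - p) * A + (1 - (x - p) / (q - p)) * A'

private noncomputable def pw (s p q B B' x : ℝ) : ℝ :=
  ((x - p) / (q - p)) ^ s * B + (1 - (x - p) / (q - p)) ^ s * B'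

private lemma lin_cont (p q A A' : ℝ) : Continuous (lin p q A A') := by
  unfold lin
  exact (((continuous_id.sub continuous_const).div_const _).mul continuous_const).add
    ((continuous_const.sub ((continuous_id.sub continuous_const).div_const _)).mul
      continuous_const)

private lemma pw_cont {s : ℝ} (hs : 0 < s) (p q B B' : ℝ) : Continuous (pw s p q B B') := by
  unfold pw
  exact ((((continuous_id.sub continuous_const).div_const _).rpow_const
      (fun _ => Or.inr hs.le)).mul continuous_const).add
    (((continuous_const.sub ((continuous_id.sub continuous_const).div_const _)).rpow_const
      (fun _ => Or.inr hs.le)).mul continuous_const)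

private lemma keyInt' {s : ℝ} (hs : 0 < s) {p q : ℝ} (hpq : p < q) (A A' B B' : ℝ) :
    (∫ x in p..q, lin p q A A' x * pw s p q B B' x)
    = (q - p) * (1 / (s + 2) * (A * B + A' * B')
        + 1 / ((s + 1) * (s + 2)) * (A * B' + A' * B)) := by
  simp only [lin, pw]
  exact keyInt hs hpq A A' B B'

theorem product_hadamard_coordinates_convex_sconvex
    (a b c d s : ℝ) (ha : 0 ≤ a) (hc : 0 ≤ c) (hab : a < b) (hcd : c < d)
    (hs : s ∈ Set.Ioc (0:ℝ) 1) (f g : ℝ → ℝ → ℝ)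
    (hf0 : ∀ x ∈ Set.Icc a b, ∀ y ∈ Set.Icc c d, 0 ≤ f x y)
    (hg0 : ∀ x ∈ Set.Icc a b, ∀ y ∈ Set.Icc c d, 0 ≤ g x y)
    (hfx : ∀ y ∈ Set.Icc c d, ConvexOn ℝ (Set.Icc a b) (fun x => f x y))
    (hfy : ∀ x ∈ Set.Icc a b, ConvexOn ℝ (Set.Icc c d) (fun y => f x y))
    (hgx : ∀ y ∈ Set.Icc c d, ∀ u ∈ Set.Icc a b, ∀ v ∈ Set.Icc a b,
        ∀ l ∈ Set.Icc (0:ℝ) 1,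
      g (l * u + (1 - l) * v) y ≤ l ^ s * g u y + (1 - l) ^ s * g v y)
    (hgy : ∀ x ∈ Set.Icc a b, ∀ u ∈ Set.Icc c d, ∀ v ∈ Set.Icc c d,
        ∀ l ∈ Set.Icc (0:ℝ) 1,
      g x (l * u + (1 - l) * v) ≤ l ^ s * g x u + (1 - l) ^ s * g x v)
    (hint : IntegrableOn (fun p : ℝ × ℝ => f p.1 p.2 * g p.1 p.2)
      (Set.Icc a b ×ˢ Set.Icc c d) volume) :
    (1 / ((b - a) * (d - c))) * ∫ x in a..b, ∫ y in c..d, f x y * g x y ≤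
      (1 / (s + 2) ^ 2) * ((f a c * g a c + f b c * g b c) +
        (f a d * g a d + f b d * g b d)) +
      (1 / ((s + 1) * (s + 2) ^ 2)) * ((f a c * g b c + f b c * g a c) +
        (f a d * g b d + f b d * g a d) + (f a c * g a d + f b c * g b d) +
        (f a d * g a c + f b d * g b c)) +
      (1 / ((s + 1) ^ 2 * (s + 2) ^ 2)) * ((f a c * g b d + f b c * g a d) +
        (f a d * g b c + f b d * g a c)) := by
  obtain ⟨hs0, hs1⟩ := hs
  have hba : (0:ℝ) < b - a := sub_pos.2 hab
  have hdc : (0:ℝ) < d - c := sub_pos.2 hcd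
  have hmemb : b ∈ Icc a b := right_mem_Icc.2 hab.le
  have hmema : a ∈ Icc a b := left_mem_Icc.2 hab.le
  have hmemd : d ∈ Icc c d := right_mem_Icc.2 hcd.le
  have hmemc : c ∈ Icc c d := left_mem_Icc.2 hcd.le
  -- the pointwise upper bound
  have hpt : ∀ x ∈ Icc a b, ∀ y ∈ Icc c d, f x y * g x y ≤
      lin c d (lin a b (f b d) (f a d) x) (lin a b (f b c) (f a c) x) y *
      pw s c d (pw s a b (g b d) (g a d) x) (pw s a b (g b c) (g a c) x) y := by
    intro x hx y hy
    have ht0 : 0 ≤ (x - a) / (b - a) := div_nonneg (by linarith [hx.1]) hba.le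
    have ht1 : (x - a) / (b - a) ≤ 1 := (div_le_one hba).2 (by linarith [hx.2])
    have hu0 : 0 ≤ (y - c) / (d - c) := div_nonneg (by linarith [hy.1]) hdc.le
    have hu1 : (y - c) / (d - c) ≤ 1 := (div_le_one hdc).2 (by linarith [hy.2])
    have hxeq : (x - a) / (b - a) * b + (1 - (x - a) / (b - a)) * a = x := by
      field_simp
      ring
    have hyeq : (y - c) / (d - c) * d + (1 - (y - c) / (d - c)) * c = y := by
      field_simp
      ring
    have hf1 : f x y ≤ (x - a) / (b - a) * f b y + (1 - (x - a) / (b - a)) * f a y := by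
      have h := (hfx y hy).2 hmemb hmema ht0 (sub_nonneg.2 ht1)
        (by ring : (x - a) / (b - a) + (1 - (x - a) / (b - a)) = 1)
      simp only [smul_eq_mul] at h
      rwa [hxeq] at h
    have hf2 : f b y ≤ (y - c) / (d - c) * f b d + (1 - (y - c) / (d - c)) * f b c := by
      have h := (hfy b hmemb).2 hmemd hmemc hu0 (sub_nonneg.2 hu1)
        (by ring : (y - c) / (d - c) + (1 - (y - c) / (d - c)) = 1)
      simp only [smul_eq_mul] at h
      rwa [hyeq] at h
    have hf3 : f a y ≤ (y - c) / (d - c) * f a d + (1 - (y - c) / (d - c)) * f a c := by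
      have h := (hfy a hmema).2 hmemd hmemc hu0 (sub_nonneg.2 hu1)
        (by ring : (y - c) / (d - c) + (1 - (y - c) / (d - c)) = 1)
      simp only [smul_eq_mul] at h
      rwa [hyeq] at h
    have hg1 : g x y ≤ ((x - a) / (b - a)) ^ s * g b y
        + (1 - (x - a) / (b - a)) ^ s * g a y := by
      have h := hgx y hy b hmemb a hmema ((x - a) / (b - a)) ⟨ht0, ht1⟩
      rwa [hxeq] at h
    have hg2 : g b y ≤ ((y - c) / (d - c)) ^ s * g b d
        + (1 - (y - c) / (d - c)) ^ s * g b c := by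
      have h := hgy b hmemb d hmemd c hmemc ((y - c) / (d - c)) ⟨hu0, hu1⟩
      rwa [hyeq] at h
    have hg3 : g a y ≤ ((y - c) / (d - c)) ^ s * g a d
        + (1 - (y - c) / (d - c)) ^ s * g a c := by
      have h := hgy a hmema d hmemd c hmemc ((y - c) / (d - c)) ⟨hu0, hu1⟩
      rwa [hyeq] at h
    have hfB : f x y ≤ lin c d (lin a b (f b d) (f a d) x) (lin a b (f b c) (f a c) x) y := by
      calc f x y ≤ (x - a) / (b - a) * f b y + (1 - (x - a) / (b - a)) * f a y := hf1
        _ ≤ (x - a) / (b - a) * ((y - c) / (d - c) * f b d + (1 - (y - c) / (d - c)) * f b c)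
            + (1 - (x - a) / (b - a)) *
              ((y - c) / (d - c) * f a d + (1 - (y - c) / (d - c)) * f a c) :=
          add_le_add (mul_le_mul_of_nonneg_left hf2 ht0)
            (mul_le_mul_of_nonneg_left hf3 (by linarith))
        _ = _ := by simp only [lin]; ring
    have hgB : g x y ≤
        pw s c d (pw s a b (g b d) (g a d) x) (pw s a b (g b c) (g a c) x) y := by
      have hts : 0 ≤ ((x - a) / (b - a)) ^ s := Real.rpow_nonneg ht0 s
      have h1ts : 0 ≤ (1 - (x - a) / (b - a)) ^ s := Real.rpow_nonneg (by linarith) s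
      calc g x y ≤ ((x - a) / (b - a)) ^ s * g b y
          + (1 - (x - a) / (b - a)) ^ s * g a y := hg1
        _ ≤ ((x - a) / (b - a)) ^ s *
              (((y - c) / (d - c)) ^ s * g b d + (1 - (y - c) / (d - c)) ^ s * g b c)
            + (1 - (x - a) / (b - a)) ^ s *
              (((y - c) / (d - c)) ^ s * g a d + (1 - (y - c) / (d - c)) ^ s * g a c) :=
          add_le_add (mul_le_mul_of_nonneg_left hg2 hts)
            (mul_le_mul_of_nonneg_left hg3 h1ts)
        _ = _ := by simp only [pw]; ring
    exact mul_le_mul hfB hgB (hg0 x hx y hy) ((hf0 x hx y hy).trans hfB)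
  -- inner inequality
  have hinner : ∀ x ∈ Icc a b, (∫ y in c..d, f x y * g x y) ≤
      ∫ y in c..d, lin c d (lin a b (f b d) (f a d) x) (lin a b (f b c) (f a c) x) y *
        pw s c d (pw s a b (g b d) (g a d) x) (pw s a b (g b c) (g a c) x) y := by
    intro x hx
    have hBc : Continuous fun y =>
        lin c d (lin a b (f b d) (f a d) x) (lin a b (f b c) (f a c) x) y *
        pw s c d (pw s a b (g b d) (g a d) x) (pw s a b (g b c) (g a c) x) y :=
      (lin_cont _ _ _ _).mul (pw_cont hs0 _ _ _ _)
    by_cases hI : IntervalIntegrable (fun y => f x y * g x y) volume c d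
    · exact intervalIntegral.integral_mono_on hcd.le hI (hBc.intervalIntegrable _ _)
        (fun y hy => hpt x hx y hy)
    · rw [intervalIntegral.integral_undef hI]
      exact intervalIntegral.integral_nonneg hcd.le fun y hy =>
        le_trans (mul_nonneg (hf0 x hx y hy) (hg0 x hx y hy)) (hpt x hx y hy)
  -- value of the inner bound integral
  have hΨ : ∀ x : ℝ, (∫ y in c..d,
      lin c d (lin a b (f b d) (f a d) x) (lin a b (f b c) (f a c) x) y *
        pw s c d (pw s a b (g b d) (g a d) x) (pw s a b (g b c) (g a c) x) y)
      = (d - c) * (1 / (s + 2) *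
          (lin a b (f b d) (f a d) x * pw s a b (g b d) (g a d) x +
           lin a b (f b c) (f a c) x * pw s a b (g b c) (g a c) x)
        + 1 / ((s + 1) * (s + 2)) *
          (lin a b (f b d) (f a d) x * pw s a b (g b c) (g a c) x +
           lin a b (f b c) (f a c) x * pw s a b (g b d) (g a d) x)) :=
    fun x => keyInt' hs0 hcd _ _ _ _
  -- integrability of the inner integral of f*g
  have hΦint : IntervalIntegrable (fun x => ∫ y in c..d, f x y * g x y) volume a b := by
    have h2 : Integrable (fun p : ℝ × ℝ => f p.1 p.2 * g p.1 p.2)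
        ((volume.restrict (Icc a b)).prod (volume.restrict (Icc c d))) := by
      rw [Measure.prod_restrict, ← Measure.volume_eq_prod]
      exact hint
    have h3 := h2.integral_prod_left
    rw [intervalIntegrable_iff_integrableOn_Icc_of_le hab.le]
    have e : (fun x => ∫ y in c..d, f x y * g x y)
        = fun x => ∫ y, (fun p : ℝ × ℝ => f p.1 p.2 * g p.1 p.2) (x, y)
            ∂(volume.restrict (Icc c d)) := by
      funext x
      rw [intervalIntegral.integral_of_le hcd.le, ← integral_Icc_eq_integral_Ioc]
    rw [e]
    exact h3
  -- outer inequality against the closed form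
  have houter : (∫ x in a..b, ∫ y in c..d, f x y * g x y) ≤
      ∫ x in a..b, (d - c) * (1 / (s + 2) *
          (lin a b (f b d) (f a d) x * pw s a b (g b d) (g a d) x +
           lin a b (f b c) (f a c) x * pw s a b (g b c) (g a c) x)
        + 1 / ((s + 1) * (s + 2)) *
          (lin a b (f b d) (f a d) x * pw s a b (g b c) (g a c) x +
           lin a b (f b c) (f a c) x * pw s a b (g b d) (g a d) x)) := by
    have hΨc : Continuous fun x : ℝ => (d - c) * (1 / (s + 2) *
          (lin a b (f b d) (f a d) x * pw s a b (g b d) (g a d) x +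
           lin a b (f b c) (f a c) x * pw s a b (g b c) (g a c) x)
        + 1 / ((s + 1) * (s + 2)) *
          (lin a b (f b d) (f a d) x * pw s a b (g b c) (g a c) x +
           lin a b (f b c) (f a c) x * pw s a b (g b d) (g a d) x)) :=
      continuous_const.mul
        ((continuous_const.mul
          (((lin_cont a b (f b d) (f a d)).mul (pw_cont hs0 a b (g b d) (g a d))).add
           ((lin_cont a b (f b c) (f a c)).mul (pw_cont hs0 a b (g b c) (g a c))))).add
         (continuous_const.mul
          (((lin_cont a b (f b d) (f a d)).mul (pw_cont hs0 a b (g b c) (g a c))).add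
           ((lin_cont a b (f b c) (f a c)).mul (pw_cont hs0 a b (g b d) (g a d))))))
    exact intervalIntegral.integral_mono_on hab.le hΦint (hΨc.intervalIntegrable _ _)
      (fun x hx => (hinner x hx).trans_eq (hΨ x))
  -- compute the outer integral of the closed form
  have hEQ : (∫ x in a..b, (d - c) * (1 / (s + 2) *
          (lin a b (f b d) (f a d) x * pw s a b (g b d) (g a d) x +
           lin a b (f b c) (f a c) x * pw s a b (g b c) (g a c) x)
        + 1 / ((s + 1) * (s + 2)) *
          (lin a b (f b d) (f a d) x * pw s a b (g b c) (g a c) x +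
           lin a b (f b c) (f a c) x * pw s a b (g b d) (g a d) x)))
      = (b - a) * (d - c) *
        ((1 / (s + 2) ^ 2) * ((f a c * g a c + f b c * g b c) +
          (f a d * g a d + f b d * g b d)) +
        (1 / ((s + 1) * (s + 2) ^ 2)) * ((f a c * g b c + f b c * g a c) +
          (f a d * g b d + f b d * g a d) + (f a c * g a d + f b c * g b d) +
          (f a d * g a c + f b d * g b c)) +
        (1 / ((s + 1) ^ 2 * (s + 2) ^ 2)) * ((f a c * g b d + f b c * g a d) +
          (f a d * g b c + f b d * g a c))) := by
    have e2 : (fun x : ℝ => (d - c) * (1 / (s + 2) *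
          (lin a b (f b d) (f a d) x * pw s a b (g b d) (g a d) x +
           lin a b (f b c) (f a c) x * pw s a b (g b c) (g a c) x)
        + 1 / ((s + 1) * (s + 2)) *
          (lin a b (f b d) (f a d) x * pw s a b (g b c) (g a c) x +
           lin a b (f b c) (f a c) x * pw s a b (g b d) (g a d) x)))
      = fun x : ℝ =>
          (lin a b (f b d) (f a d) x * pw s a b (g b d) (g a d) x) * ((d - c) * (1 / (s + 2)))
        + (lin a b (f b c) (f a c) x * pw s a b (g b c) (g a c) x) * ((d - c) * (1 / (s + 2)))
        + (lin a b (f b d) (f a d) x * pw s a b (g b c) (g a c) x) *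
            ((d - c) * (1 / ((s + 1) * (s + 2))))
        + (lin a b (f b c) (f a c) x * pw s a b (g b d) (g a d) x) *
            ((d - c) * (1 / ((s + 1) * (s + 2)))) := by
      funext x; ring
    have i11 : IntervalIntegrable (fun x : ℝ =>
        (lin a b (f b d) (f a d) x * pw s a b (g b d) (g a d) x) * ((d - c) * (1 / (s + 2))))
        volume a b :=
      ((((lin_cont _ _ _ _).mul (pw_cont hs0 _ _ _ _)).mul
        continuous_const)).intervalIntegrable _ _
    have i22 : IntervalIntegrable (fun x : ℝ =>
        (lin a b (f b c) (f a c) x * pw s a b (g b c) (g a c) x) * ((d - c) * (1 / (s + 2))))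
        volume a b :=
      ((((lin_cont _ _ _ _).mul (pw_cont hs0 _ _ _ _)).mul
        continuous_const)).intervalIntegrable _ _
    have i12 : IntervalIntegrable (fun x : ℝ =>
        (lin a b (f b d) (f a d) x * pw s a b (g b c) (g a c) x) *
          ((d - c) * (1 / ((s + 1) * (s + 2))))) volume a b :=
      ((((lin_cont _ _ _ _).mul (pw_cont hs0 _ _ _ _)).mul
        continuous_const)).intervalIntegrable _ _
    have i21 : IntervalIntegrable (fun x : ℝ =>
        (lin a b (f b c) (f a c) x * pw s a b (g b d) (g a d) x) *
          ((d - c) * (1 / ((s + 1) * (s + 2))))) volume a b :=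
      ((((lin_cont _ _ _ _).mul (pw_cont hs0 _ _ _ _)).mul
        continuous_const)).intervalIntegrable _ _
    rw [e2, intervalIntegral.integral_add ((i11.add i22).add i12) i21,
      intervalIntegral.integral_add (i11.add i22) i12,
      intervalIntegral.integral_add i11 i22,
      intervalIntegral.integral_mul_const, intervalIntegral.integral_mul_const,
      intervalIntegral.integral_mul_const, intervalIntegral.integral_mul_const,
      keyInt' hs0 hab (f b d) (f a d) (g b d) (g a d),
      keyInt' hs0 hab (f b c) (f a c) (g b c) (g a c),
      keyInt' hs0 hab (f b d) (f a d) (g b c) (g a c),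
      keyInt' hs0 hab (f b c) (f a c) (g b d) (g a d)]
    have h1 : s + 1 ≠ 0 := by linarith
    have h2 : s + 2 ≠ 0 := by linarith
    field_simp
    ring
  -- conclusion
  have hM : (0:ℝ) < (b - a) * (d - c) := mul_pos hba hdc
  calc (1 / ((b - a) * (d - c))) * ∫ x in a..b, ∫ y in c..d, f x y * g x y
      ≤ (1 / ((b - a) * (d - c))) * ((b - a) * (d - c) *
        ((1 / (s + 2) ^ 2) * ((f a c * g a c + f b c * g b c) +
          (f a d * g a d + f b d * g b d)) +
        (1 / ((s + 1) * (s + 2) ^ 2)) * ((f a c * g b c + f b c * g a c) +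
          (f a d * g b d + f b d * g a d) + (f a c * g a d + f b c * g b d) +
          (f a d * g a c + f b d * g b c)) +
        (1 / ((s + 1) ^ 2 * (s + 2) ^ 2)) * ((f a c * g b d + f b c * g a d) +
          (f a d * g b c + f b d * g a c)))) := by
        apply mul_le_mul_of_nonneg_left _ (one_div_nonneg.2 hM.le)
        rw [← hEQ]
        exact houter
    _ = _ := by
        rw [one_div, inv_mul_cancel_left₀ hM.ne']
end

section
/- If g : Δ = [a,b]×[c,d] → [0,∞) is convex on the co-ordinates on Δ (a < b, c < d) and integrable, then 4 g((a+b)/2,(c+d)/2) − (1/((b-a)(d-c))) ∫_a^b ∫_c^d g(x,y) dy dx ≤ (3/4)·(g(a,c)+g(b,c)+g(a,d)+g(b,d)). -/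
open MeasureTheory Set

/-- Lower Hermite–Hadamard bound via the reflection trick. -/
lemma had_lower {a b : ℝ} (hab : a < b) {f : ℝ → ℝ}
    (hf : ConvexOn ℝ (Set.Icc a b) f) (hfi : IntegrableOn f (Set.Icc a b)) :
    (b - a) * f ((a + b) / 2) ≤ ∫ x in a..b, f x := by
  have h1 : IntervalIntegrable f volume a b :=
    (intervalIntegrable_iff_integrableOn_Icc_of_le hab.le).2 hfi
  have h2 : IntervalIntegrable (fun x => f (a + b - x)) volume a b := by
    have := (h1.comp_sub_left (a + b)).symm
    simpa using this
  have key : ∀ x ∈ Set.Icc a b, f ((a + b) / 2) ≤ (f x + f (a + b - x)) / 2 := by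
    intro x hx
    have hx' : a + b - x ∈ Set.Icc a b := ⟨by linarith [hx.2], by linarith [hx.1]⟩
    have h := hf.2 hx hx' (by norm_num : (0:ℝ) ≤ 1/2) (by norm_num : (0:ℝ) ≤ 1/2)
      (by norm_num : (1/2 : ℝ) + 1/2 = 1)
    simp only [smul_eq_mul] at h
    have hm : (1/2 : ℝ) * x + (1/2 : ℝ) * (a + b - x) = (a + b) / 2 := by ring
    rw [hm] at h
    linarith
  have hmono : (∫ _x in a..b, f ((a + b) / 2)) ≤ ∫ x in a..b, (f x + f (a + b - x)) / 2 := by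
    apply intervalIntegral.integral_mono_on hab.le intervalIntegrable_const
      ((h1.add h2).div_const 2)
    exact key
  rw [intervalIntegral.integral_const] at hmono
  have hsplit : (∫ x in a..b, (f x + f (a + b - x)) / 2)
      = ((∫ x in a..b, f x) + ∫ x in a..b, f (a + b - x)) / 2 := by
    rw [intervalIntegral.integral_div, intervalIntegral.integral_add h1 h2]
  have hrefl : (∫ x in a..b, f (a + b - x)) = ∫ x in a..b, f x := by
    rw [intervalIntegral.integral_comp_sub_left f (a + b),
      show a + b - b = a by ring, show a + b - a = b by ring]
  rw [hsplit, hrefl] at hmono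
  simp only [smul_eq_mul] at hmono
  linarith

/-- A nonnegative convex function on a compact interval is integrable there. -/
lemma convex_integrableOn {a b : ℝ} (hab : a < b) {f : ℝ → ℝ}
    (hf : ConvexOn ℝ (Set.Icc a b) f) (h0 : ∀ x ∈ Set.Icc a b, 0 ≤ f x) :
    IntegrableOn f (Set.Icc a b) := by
  rw [integrableOn_Icc_iff_integrableOn_Ioo]
  have hconv : ConvexOn ℝ (Set.Ioo a b) f :=
    hf.subset Ioo_subset_Icc_self (convex_Ioo a b)
  have hc : ContinuousOn f (Set.Ioo a b) := hconv.continuousOn isOpen_Ioo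
  have hmeas : AEStronglyMeasurable f (volume.restrict (Set.Ioo a b)) :=
    hc.aestronglyMeasurable measurableSet_Ioo
  have hfin : IsFiniteMeasure (volume.restrict (Set.Ioo a b)) := by
    constructor
    rw [Measure.restrict_apply_univ]
    exact measure_Ioo_lt_top
  refine Integrable.mono' (integrable_const (max (f a) (f b))) hmeas ?_
  filter_upwards [ae_restrict_mem measurableSet_Ioo] with x hx
  have hx' : x ∈ Set.Icc a b := Ioo_subset_Icc_self hx
  have hub : f x ≤ max (f a) (f b) :=
    hf.le_max_of_mem_Icc (left_mem_Icc.2 hab.le) (right_mem_Icc.2 hab.le) hx'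
  have hlb : 0 ≤ f x := h0 x hx'
  rw [Real.norm_eq_abs, abs_of_nonneg hlb]
  exact hub

theorem hadamard_coordinates_midpoint
    (a b c d : ℝ) (hab : a < b) (hcd : c < d) (g : ℝ → ℝ → ℝ)
    (hg0 : ∀ x ∈ Set.Icc a b, ∀ y ∈ Set.Icc c d, 0 ≤ g x y)
    (hgx : ∀ y ∈ Set.Icc c d, ConvexOn ℝ (Set.Icc a b) (fun x => g x y))
    (hgy : ∀ x ∈ Set.Icc a b, ConvexOn ℝ (Set.Icc c d) (fun y => g x y))
    (hint : IntegrableOn (fun p : ℝ × ℝ => g p.1 p.2)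
      (Set.Icc a b ×ˢ Set.Icc c d) volume) :
    4 * g ((a + b) / 2) ((c + d) / 2) -
        (1 / ((b - a) * (d - c))) * ∫ x in a..b, ∫ y in c..d, g x y ≤
      (3 / 4) * (g a c + g b c + g a d + g b d) := by
  have hmx : (a + b) / 2 ∈ Set.Icc a b := ⟨by linarith, by linarith⟩
  have hmy : (c + d) / 2 ∈ Set.Icc c d := ⟨by linarith, by linarith⟩
  have hac : a ∈ Set.Icc a b := left_mem_Icc.2 hab.le
  have hbc : b ∈ Set.Icc a b := right_mem_Icc.2 hab.le
  have hcc : c ∈ Set.Icc c d := left_mem_Icc.2 hcd.le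
  have hdc : d ∈ Set.Icc c d := right_mem_Icc.2 hcd.le
  -- Step A: corner bound 4 g(mid) ≤ sum of corners
  have midpt : ∀ (s t : ℝ) (f : ℝ → ℝ), ConvexOn ℝ (Set.Icc s t) f → s ≤ t →
      f ((s + t) / 2) ≤ (f s + f t) / 2 := by
    intro s t f hf hst
    have h := hf.2 (left_mem_Icc.2 hst) (right_mem_Icc.2 hst)
      (by norm_num : (0:ℝ) ≤ 1/2) (by norm_num : (0:ℝ) ≤ 1/2)
      (by norm_num : (1/2 : ℝ) + 1/2 = 1)
    simp only [smul_eq_mul] at h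
    have : (1/2 : ℝ) * s + (1/2 : ℝ) * t = (s + t) / 2 := by ring
    rw [this] at h
    linarith
  have hA1 : g ((a + b) / 2) ((c + d) / 2)
      ≤ (g a ((c + d) / 2) + g b ((c + d) / 2)) / 2 :=
    midpt a b (fun x => g x ((c + d) / 2)) (hgx _ hmy) hab.le
  have hA2 : g a ((c + d) / 2) ≤ (g a c + g a d) / 2 :=
    midpt c d (fun y => g a y) (hgy a hac) hcd.le
  have hA3 : g b ((c + d) / 2) ≤ (g b c + g b d) / 2 :=
    midpt c d (fun y => g b y) (hgy b hbc) hcd.le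
  have hA : g ((a + b) / 2) ((c + d) / 2)
      ≤ (g a c + g b c + g a d + g b d) / 4 := by linarith
  -- Step B: lower bound for the double integral
  have hprod : Integrable (fun p : ℝ × ℝ => g p.1 p.2)
      ((volume.restrict (Set.Icc a b)).prod (volume.restrict (Set.Icc c d))) := by
    rw [Measure.prod_restrict]
    rw [← Measure.volume_eq_prod]
    exact hint
  have hae := hprod.prod_right_ae
  -- integrability of x ↦ g x my on Icc a b
  have hgmy_int : IntegrableOn (fun x => g x ((c + d) / 2)) (Set.Icc a b) :=
    convex_integrableOn hab (hgx _ hmy) (fun x hx => hg0 x hx _ hmy)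
  -- F is integrable on Icc a b
  have hF_int : Integrable (fun x => ∫ y, g x y ∂(volume.restrict (Set.Icc c d)))
      (volume.restrict (Set.Icc a b)) := hprod.integral_prod_left
  -- pointwise a.e. inequality
  have haeineq : ∀ᵐ x ∂(volume.restrict (Set.Icc a b)),
      (d - c) * g x ((c + d) / 2) ≤ ∫ y, g x y ∂(volume.restrict (Set.Icc c d)) := by
    filter_upwards [hae, ae_restrict_mem measurableSet_Icc] with x hxint hxmem
    have h := had_lower hcd (hgy x hxmem) hxint
    have heq : (∫ y in c..d, g x y) = ∫ y, g x y ∂(volume.restrict (Set.Icc c d)) := by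
      rw [intervalIntegral.integral_of_le hcd.le, ← integral_Icc_eq_integral_Ioc]
    linarith [heq ▸ h]
  have hBint : (∫ x in Set.Icc a b, (d - c) * g x ((c + d) / 2))
      ≤ ∫ x in Set.Icc a b, ∫ y, g x y ∂(volume.restrict (Set.Icc c d)) :=
    integral_mono_ae (hgmy_int.const_mul _) hF_int haeineq
  -- evaluate the left side
  have hBleft : (b - a) * (d - c) * g ((a + b) / 2) ((c + d) / 2)
      ≤ ∫ x in Set.Icc a b, (d - c) * g x ((c + d) / 2) := by
    rw [integral_const_mul]
    have h := had_lower hab (hgx _ hmy) hgmy_int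
    have heq : (∫ x in a..b, g x ((c + d) / 2))
        = ∫ x in Set.Icc a b, g x ((c + d) / 2) := by
      rw [intervalIntegral.integral_of_le hab.le, ← integral_Icc_eq_integral_Ioc]
    rw [heq] at h
    nlinarith [h, sub_pos.2 hcd]
  -- identify the double integral
  have hBright : (∫ x in Set.Icc a b, ∫ y, g x y ∂(volume.restrict (Set.Icc c d)))
      = ∫ x in a..b, ∫ y in c..d, g x y := by
    rw [intervalIntegral.integral_of_le hab.le, ← integral_Icc_eq_integral_Ioc]
    apply integral_congr_ae
    filter_upwards with x
    rw [intervalIntegral.integral_of_le hcd.le, ← integral_Icc_eq_integral_Ioc]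
  have hB : (b - a) * (d - c) * g ((a + b) / 2) ((c + d) / 2)
      ≤ ∫ x in a..b, ∫ y in c..d, g x y := by
    rw [← hBright]; linarith
  -- Step C: conclude
  have hK : (0 : ℝ) < (b - a) * (d - c) :=
    mul_pos (sub_pos.2 hab) (sub_pos.2 hcd)
  have hC : g ((a + b) / 2) ((c + d) / 2)
      ≤ (1 / ((b - a) * (d - c))) * ∫ x in a..b, ∫ y in c..d, g x y := by
    rw [one_div, ← div_eq_inv_mul, le_div_iff₀ hK]
    calc g ((a + b) / 2) ((c + d) / 2) * ((b - a) * (d - c))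
        = (b - a) * (d - c) * g ((a + b) / 2) ((c + d) / 2) := by ring
      _ ≤ _ := hB
  linarith
end

section
/- If f, g : [a,b] → [0,∞) are both convex on [a,b] (a, b ∈ ℝ, a < b) with f·g integrable, then (1/(b-a)) ∫_a^b f(x)g(x) dx ≤ (1/3)·(f(a)g(a)+f(b)g(b)) + (1/6)·(f(a)g(b)+f(b)g(a)). -/
open MeasureTheory Set

/-! On `[a, b]` each of `f`, `g` lies below its chord, so, both being nonnegative, `f * g` lies
below the product of the two chords. That product is a quadratic with weights `(b - x)²`,
`(x - a)²` and `(b - x)(x - a)`, whose integrals over `[a, b]` are `(b - a)³ / 3`, `(b - a)³ / 3`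
and `(b - a)³ / 6`. -/

theorem ConvexOn.mul_le_chord {a b x : ℝ} {f : ℝ → ℝ} (hf : ConvexOn ℝ (Icc a b) f)
    (hx : x ∈ Icc a b) : (b - a) * f x ≤ (b - x) * f a + (x - a) * f b := by
  have ha : a ∈ Icc a b := left_mem_Icc.2 (hx.1.trans hx.2)
  have hb : b ∈ Icc a b := right_mem_Icc.2 (hx.1.trans hx.2)
  rcases hx.1.eq_or_lt with rfl | hax
  · linarith
  rcases hx.2.eq_or_lt with rfl | hxb
  · linarith
  exact hf.secant_mono_aux1 ha hb hax hxb

theorem ConvexOn.sq_mul_mul_le_chord_mul_chord {a b x : ℝ} {f g : ℝ → ℝ}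
    (hf : ConvexOn ℝ (Icc a b) f) (hg : ConvexOn ℝ (Icc a b) g) (hx : x ∈ Icc a b)
    (hfx : 0 ≤ f x) (hgx : 0 ≤ g x) :
    (b - a) ^ 2 * (f x * g x) ≤
      ((b - x) * f a + (x - a) * f b) * ((b - x) * g a + (x - a) * g b) := by
  have hba : 0 ≤ b - a := sub_nonneg.2 (hx.1.trans hx.2)
  calc (b - a) ^ 2 * (f x * g x) = ((b - a) * f x) * ((b - a) * g x) := by ring
    _ ≤ _ := mul_le_mul (hf.mul_le_chord hx) (hg.mul_le_chord hx)
        (mul_nonneg hba hgx) ((mul_nonneg hba hfx).trans (hf.mul_le_chord hx))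

theorem integral_affine_mul_affine (a b p q r s : ℝ) :
    ∫ x in a..b, ((b - x) * p + (x - a) * q) * ((b - x) * r + (x - a) * s) =
      (b - a) ^ 3 * ((p * r + q * s) / 3 + (p * s + q * r) / 6) := by
  have hexp : ∀ x : ℝ, ((b - x) * p + (x - a) * q) * ((b - x) * r + (x - a) * s) =
      x ^ 2 * ((q - p) * (s - r)) + x * ((b * p - a * q) * (s - r) + (q - p) * (b * r - a * s))
        + (b * p - a * q) * (b * r - a * s) := fun x => by ring
  simp_rw [hexp]
  rw [intervalIntegral.integral_add, intervalIntegral.integral_add]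
  all_goals try exact Continuous.intervalIntegrable (by fun_prop) _ _
  simp only [intervalIntegral.integral_mul_const, integral_pow, integral_id,
    intervalIntegral.integral_const, smul_eq_mul]
  ring

theorem product_hadamard_convex_convex
    (a b : ℝ) (hab : a < b) (f g : ℝ → ℝ)
    (hf0 : ∀ x ∈ Set.Icc a b, 0 ≤ f x) (hg0 : ∀ x ∈ Set.Icc a b, 0 ≤ g x)
    (hf : ConvexOn ℝ (Set.Icc a b) f) (hg : ConvexOn ℝ (Set.Icc a b) g)
    (hfg : IntervalIntegrable (fun x => f x * g x) volume a b) :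
    (1 / (b - a)) * ∫ x in a..b, f x * g x ≤
      (1 / 3) * (f a * g a + f b * g b) + (1 / 6) * (f a * g b + f b * g a) := by
  have hba : 0 < b - a := sub_pos.2 hab
  have hbound : (b - a) ^ 2 * ∫ x in a..b, f x * g x ≤ (b - a) ^ 2 * ((b - a) *
      ((1 / 3) * (f a * g a + f b * g b) + (1 / 6) * (f a * g b + f b * g a))) := calc
    _ = ∫ x in a..b, (b - a) ^ 2 * (f x * g x) := (intervalIntegral.integral_const_mul _ _).symm
    _ ≤ ∫ x in a..b, ((b - x) * f a + (x - a) * f b) * ((b - x) * g a + (x - a) * g b) :=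
      intervalIntegral.integral_mono_on hab.le (hfg.const_mul _)
        (Continuous.intervalIntegrable (by fun_prop) _ _) fun x hx =>
          hf.sq_mul_mul_le_chord_mul_chord hg hx (hf0 x hx) (hg0 x hx)
    _ = _ := by rw [integral_affine_mul_affine]; ring
  rw [div_mul_eq_mul_div, one_mul, div_le_iff₀' hba]
  exact le_of_mul_le_mul_left hbound (pow_pos hba 2)
end

section
/- Let g : [a,b] → [0,∞) be s-convex in the second sense for some s ∈ (0,1], a, b ∈ [0,∞), a < b, and integrable. Then (1/(b-a)) ∫_a^b g(x) dx ≤ (g(a)+g(b))/(s+1). -/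
/-! Substituting `x = t b + (1 - t) a` turns the mean of `g` over `[a, b]` into
`∫₀¹ g (t b + (1 - t) a) dt`. Bound the integrand by `t ^ s g(b) + (1 - t) ^ s g(a)`, which
integrates to `(g a + g b) / (s + 1)` because `∫₀¹ t ^ s dt = ∫₀¹ (1 - t) ^ s dt = 1 / (s + 1)`. -/

open MeasureTheory intervalIntegral

section UnitInterval

variable {s : ℝ}

lemma integral_rpow_zero_one (hs : -1 < s) : ∫ t in (0:ℝ)..1, t ^ s = 1 / (s + 1) := by
  rw [integral_rpow (Or.inl hs), Real.one_rpow, Real.zero_rpow (by linarith)]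
  ring

lemma integral_one_sub_rpow_zero_one (hs : -1 < s) :
    ∫ t in (0:ℝ)..1, (1 - t) ^ s = 1 / (s + 1) := by
  simpa [integral_comp_sub_left (fun t : ℝ => t ^ s) 1] using integral_rpow_zero_one hs

lemma intervalIntegrable_one_sub_rpow_zero_one (hs : -1 < s) :
    IntervalIntegrable (fun t : ℝ => (1 - t) ^ s) volume 0 1 := by
  simpa using ((intervalIntegrable_rpow' hs (a := 0) (b := 1)).comp_sub_left 1).symm

end UnitInterval

section Segment

variable {a b : ℝ} {g : ℝ → ℝ}

lemma intervalIntegrable_comp_segment (hab : a ≠ b) (hg : IntervalIntegrable g volume a b) :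
    IntervalIntegrable (fun t => g (t * b + (1 - t) * a)) volume 0 1 := by
  have h := (hg.comp_add_right a).comp_mul_left (c := b - a)
  simp only [sub_self, zero_div, div_self (sub_ne_zero.2 hab.symm)] at h
  convert h using 3 with t
  ring

lemma inv_sub_mul_integral_eq_integral_comp_segment (hab : a ≠ b) :
    (b - a)⁻¹ * ∫ x in a..b, g x = ∫ t in (0:ℝ)..1, g (t * b + (1 - t) * a) := by
  have hsegment : ∀ t, t * b + (1 - t) * a = (b - a) * t + a := fun t => by ring
  simp only [hsegment, integral_comp_mul_add g (sub_ne_zero.2 hab.symm), mul_zero, zero_add,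
    mul_one, sub_add_cancel, smul_eq_mul]

end Segment

theorem hadamard_sconvex_general
    (a b s : ℝ) (hab : a < b)
    (hs : s ∈ Set.Ioc (0:ℝ) 1) (g : ℝ → ℝ)
    (hgs : ∀ x ∈ Set.Icc a b, ∀ y ∈ Set.Icc a b, ∀ l ∈ Set.Icc (0:ℝ) 1,
      g (l * x + (1 - l) * y) ≤ l ^ s * g x + (1 - l) ^ s * g y)
    (hg : IntervalIntegrable g volume a b) :
    (1 / (b - a)) * ∫ x in a..b, g x ≤ (g a + g b) / (s + 1) := by
  have hs' : -1 < s := by linarith [hs.1]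
  have hpow := intervalIntegrable_rpow' hs' (a := 0) (b := 1)
  have hpow' := intervalIntegrable_one_sub_rpow_zero_one hs'
  calc (1 / (b - a)) * ∫ x in a..b, g x
      = ∫ t in (0:ℝ)..1, g (t * b + (1 - t) * a) := by
        rw [one_div, inv_sub_mul_integral_eq_integral_comp_segment hab.ne]
    _ ≤ ∫ t in (0:ℝ)..1, t ^ s * g b + (1 - t) ^ s * g a :=
        integral_mono_on zero_le_one (intervalIntegrable_comp_segment hab.ne hg)
          ((hpow.mul_const _).add (hpow'.mul_const _))
          fun t ht => hgs b ⟨hab.le, le_rfl⟩ a ⟨le_rfl, hab.le⟩ t ht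
    _ = (g a + g b) / (s + 1) := by
        rw [integral_add (hpow.mul_const _) (hpow'.mul_const _),
          intervalIntegral.integral_mul_const, intervalIntegral.integral_mul_const,
          integral_rpow_zero_one hs', integral_one_sub_rpow_zero_one hs']
        ring

theorem hadamard_sconvex
    (a b s : ℝ) (ha : 0 ≤ a) (hb : 0 ≤ b) (hab : a < b)
    (hs : s ∈ Set.Ioc (0:ℝ) 1) (g : ℝ → ℝ)
    (hg0 : ∀ x ∈ Set.Icc a b, 0 ≤ g x)
    (hgs : ∀ x ∈ Set.Icc a b, ∀ y ∈ Set.Icc a b, ∀ l ∈ Set.Icc (0:ℝ) 1,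
      g (l * x + (1 - l) * y) ≤ l ^ s * g x + (1 - l) ^ s * g y)
    (hg : IntervalIntegrable g volume a b) :
    (1 / (b - a)) * ∫ x in a..b, g x ≤ (g a + g b) / (s + 1) :=
  hadamard_sconvex_general a b s hab hs g hgs hg
end
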